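/- arXiv:2504.09889 — 9 statements merged into one kernel-verified Lean document; each statement's English description precedes it below -/
import Mathlib

section
/- Let A and B be square ℕ-matrices with no zero rows and suppose B is an outsplit of A, say A = DE and B = ED with D an n×m division matrix and E an m×n ℕ-matrix. Then Dᵀ 𝟙_n = 𝟙_m, and the pair (D,E) is a unital shift equivalence of lag 1 from A to B. In particular, A and B are unitally shift equivalent. -/
open Matrix

/-- `(R,S)` is a shift equivalence of lag `l` from the `n × n` ℕ-matrix `A` to the
`m × m` ℕ-matrix `B`. -/
def IsShiftEquivalence {n m : ℕ} (A : Matrix (Fin n) (Fin n) ℕ) (B : Matrix (Fin m) (Fin m) ℕ)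
    (R : Matrix (Fin n) (Fin m) ℕ) (S : Matrix (Fin m) (Fin n) ℕ) (l : ℕ) : Prop :=
  1 ≤ l ∧ A ^ l = R * S ∧ B ^ l = S * R ∧ A * R = R * B ∧ B * S = S * A

/-- `(R,S)` is a unital shift equivalence of lag `l` from `A` to `B`:
a shift equivalence such that `(Bᵀ)^p Rᵀ 𝟙 = (Bᵀ)^(p+q) 𝟙` for some `p q : ℕ`. -/
def IsUnitalShiftEquivalence {n m : ℕ} (A : Matrix (Fin n) (Fin n) ℕ)
    (B : Matrix (Fin m) (Fin m) ℕ)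
    (R : Matrix (Fin n) (Fin m) ℕ) (S : Matrix (Fin m) (Fin n) ℕ) (l : ℕ) : Prop :=
  IsShiftEquivalence A B R S l ∧
    ∃ p q : ℕ, (Bᵀ ^ p) *ᵥ (Rᵀ *ᵥ fun _ => 1) = (Bᵀ ^ (p + q)) *ᵥ (fun _ => 1)

/-- `A` and `B` are unitally shift equivalent. -/
def UnitallyShiftEquivalent {n m : ℕ} (A : Matrix (Fin n) (Fin n) ℕ)
    (B : Matrix (Fin m) (Fin m) ℕ) : Prop :=
  ∃ (l : ℕ) (R : Matrix (Fin n) (Fin m) ℕ) (S : Matrix (Fin m) (Fin n) ℕ),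
    IsUnitalShiftEquivalence A B R S l

/-- `A` and `B` are shift equivalent. -/
def ShiftEquivalent {n m : ℕ} (A : Matrix (Fin n) (Fin n) ℕ)
    (B : Matrix (Fin m) (Fin m) ℕ) : Prop :=
  ∃ (l : ℕ) (R : Matrix (Fin n) (Fin m) ℕ) (S : Matrix (Fin m) (Fin n) ℕ),
    IsShiftEquivalence A B R S l

/-- `A` has no zero rows. -/
def NoZeroRows {n : ℕ} (A : Matrix (Fin n) (Fin n) ℕ) : Prop :=
  ∀ i, ∃ j, A i j ≠ 0

/-- A rectangular `{0,1}`-matrix is a division matrix if every row contains at least one `1`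
and every column contains exactly one `1`. -/
def IsDivisionMatrix {n m : ℕ} (D : Matrix (Fin n) (Fin m) ℕ) : Prop :=
  (∀ i j, D i j = 0 ∨ D i j = 1) ∧ (∀ i, ∃ j, D i j = 1) ∧ (∀ j, ∃! i, D i j = 1)

/-- If `B` is an outsplit of `A`, witnessed by `A = D * E` and `B = E * D`
with `D` a division matrix, then `Dᵀ 𝟙 = 𝟙` and `(D, E)` is a unital shift equivalence of
lag `1` from `A` to `B`; in particular `A` and `B` are unitally shift equivalent. -/
theorem outsplit_implies_unitallyShiftEquivalent
    {n m : ℕ} (A : Matrix (Fin n) (Fin n) ℕ) (B : Matrix (Fin m) (Fin m) ℕ)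
    (hA : NoZeroRows A) (hB : NoZeroRows B)
    (D : Matrix (Fin n) (Fin m) ℕ) (E : Matrix (Fin m) (Fin n) ℕ)
    (hD : IsDivisionMatrix D) (hDE : A = D * E) (hED : B = E * D) :
    (Dᵀ *ᵥ (fun _ => 1) = fun _ => (1 : ℕ)) ∧
    IsUnitalShiftEquivalence A B D E 1 ∧
    UnitallyShiftEquivalent A B := by
  obtain ⟨h01, _, hcol⟩ := hD
  have hunit : Dᵀ *ᵥ (fun _ => 1) = fun _ => (1 : ℕ) := by
    funext j
    obtain ⟨i0, hi0, huniq⟩ := hcol j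
    simp only [mulVec, dotProduct, transpose_apply, mul_one]
    rw [Finset.sum_eq_single i0]
    · exact hi0
    · intro i _ hne
      rcases h01 i j with h | h
      · exact h
      · exact absurd (huniq i h) hne
    · simp
  have hse : IsShiftEquivalence A B D E 1 := by
    refine ⟨le_refl 1, by simpa using hDE, by simpa using hED, ?_, ?_⟩
    · rw [hDE, hED, Matrix.mul_assoc]
    · rw [hDE, hED, Matrix.mul_assoc]
  have huse : IsUnitalShiftEquivalence A B D E 1 := by
    refine ⟨hse, 0, 0, ?_⟩
    simp [hunit]
  exact ⟨hunit, huse, 1, D, E, huse⟩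
end

section
/- Let A and B be n×n ℕ-matrices and suppose there exist an n×m ℕ-matrix S and m×n ℕ-matrices R_A, R_B such that A = S R_A, B = S R_B, and R_A S = R_B S. Then A B = B² and B A = A², and the pair (B, A) is a unital shift equivalence of lag 2 from A to B. In particular, A and B are unitally shift equivalent. -/
open Matrix

/-- If `A = S * Rₐ`, `B = S * R_b` and `Rₐ * S = R_b * S` (a balanced
elementary strong shift equivalence), then `A * B = B ^ 2`, `B * A = A ^ 2`, and `(B, A)`
is a unital shift equivalence of lag `2` from `A` to `B`; in particular `A` and `B` are
unitally shift equivalent. -/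
theorem balancedElementary_implies_unitallyShiftEquivalent
    {n m : ℕ} (A B : Matrix (Fin n) (Fin n) ℕ)
    (S : Matrix (Fin n) (Fin m) ℕ) (RA RB : Matrix (Fin m) (Fin n) ℕ)
    (hA : A = S * RA) (hB : B = S * RB) (hRS : RA * S = RB * S) :
    A * B = B ^ 2 ∧ B * A = A ^ 2 ∧
    IsUnitalShiftEquivalence A B B A 2 ∧
    UnitallyShiftEquivalent A B := by
  have hAB : A * B = B ^ 2 := by
    subst hA hB; rw [pow_two]
    rw [Matrix.mul_assoc, ← Matrix.mul_assoc RA, hRS, Matrix.mul_assoc RB, ← Matrix.mul_assoc]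
  have hBA : B * A = A ^ 2 := by
    subst hA hB; rw [pow_two]
    rw [Matrix.mul_assoc, ← Matrix.mul_assoc RB, ← hRS, Matrix.mul_assoc RA, ← Matrix.mul_assoc]
  have hse : IsUnitalShiftEquivalence A B B A 2 := by
    refine ⟨⟨by norm_num, hBA.symm, hAB.symm, hAB.trans (pow_two B),
      hBA.trans (pow_two A)⟩, 0, 1, ?_⟩
    simp
  exact ⟨hAB, hBA, hse, 2, B, A, hse⟩
end

section
/- Let A and B be square ℕ-matrices with no zero rows. If A and B are balanced strong shift equivalent, then A and B are unitally shift equivalent. -/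
open Matrix

/-- `B` is an outsplit of `A`: `A = D * E` and `B = E * D` for a division matrix `D`. -/
def IsOutsplit {n m : ℕ} (A : Matrix (Fin n) (Fin n) ℕ) (B : Matrix (Fin m) (Fin m) ℕ) :
    Prop :=
  ∃ (D : Matrix (Fin n) (Fin m) ℕ) (E : Matrix (Fin m) (Fin n) ℕ),
    IsDivisionMatrix D ∧ A = D * E ∧ B = E * D

/-- `A` and `B` are balanced elementary strong shift equivalent: both are insplits of a
common matrix via the same (transposed) division matrix. -/
def IsBalancedElementarySSE {n : ℕ} (A B : Matrix (Fin n) (Fin n) ℕ) : Prop :=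
  ∃ (k : ℕ) (D : Matrix (Fin k) (Fin n) ℕ) (RA RB : Matrix (Fin k) (Fin n) ℕ),
    IsDivisionMatrix D ∧ A = Dᵀ * RA ∧ B = Dᵀ * RB ∧ RA * Dᵀ = RB * Dᵀ

/-- One generating step of balanced strong shift equivalence, as a relation on square
ℕ-matrices with no zero rows (of varying sizes): either a balanced elementary strong shift
equivalence or an outsplit. -/
inductive BalancedSSEStep :
    (Σ n : ℕ, Matrix (Fin n) (Fin n) ℕ) → (Σ n : ℕ, Matrix (Fin n) (Fin n) ℕ) → Prop where
  | balanced {n : ℕ} {A B : Matrix (Fin n) (Fin n) ℕ}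
      (hA : NoZeroRows A) (hB : NoZeroRows B) (h : IsBalancedElementarySSE A B) :
      BalancedSSEStep ⟨n, A⟩ ⟨n, B⟩
  | outsplit {n m : ℕ} {A : Matrix (Fin n) (Fin n) ℕ} {B : Matrix (Fin m) (Fin m) ℕ}
      (hA : NoZeroRows A) (hB : NoZeroRows B) (h : IsOutsplit A B) :
      BalancedSSEStep ⟨n, A⟩ ⟨m, B⟩

/-- Balanced strong shift equivalence: the equivalence relation generated by balanced
elementary strong shift equivalences and outsplits. -/
def BalancedSSE {n m : ℕ} (A : Matrix (Fin n) (Fin n) ℕ) (B : Matrix (Fin m) (Fin m) ℕ) :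
    Prop :=
  Relation.EqvGen BalancedSSEStep ⟨n, A⟩ ⟨m, B⟩


section AuxUSE

variable {a b c : ℕ}

/-- If `X * Y = Y * Z` then `X^k * Y = Y * Z^k`. -/
lemma matrix_pow_intertwine {X : Matrix (Fin a) (Fin a) ℕ} {Y : Matrix (Fin a) (Fin b) ℕ}
    {Z : Matrix (Fin b) (Fin b) ℕ} (h : X * Y = Y * Z) (k : ℕ) :
    X ^ k * Y = Y * Z ^ k := by
  induction k with
  | zero => simp
  | succ k ih =>
    calc X ^ (k + 1) * Y = X ^ k * (X * Y) := by rw [pow_succ, Matrix.mul_assoc]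
      _ = (X ^ k * Y) * Z := by rw [h, Matrix.mul_assoc]
      _ = Y * (Z ^ k * Z) := by rw [ih, Matrix.mul_assoc]
      _ = Y * Z ^ (k + 1) := by rw [← pow_succ]

lemma matrix_pow_intertwine_vec {X : Matrix (Fin a) (Fin a) ℕ} {Y : Matrix (Fin a) (Fin b) ℕ}
    {Z : Matrix (Fin b) (Fin b) ℕ} (h : X * Y = Y * Z) (k : ℕ) (v : Fin b → ℕ) :
    X ^ k *ᵥ (Y *ᵥ v) = Y *ᵥ (Z ^ k *ᵥ v) := by
  rw [mulVec_mulVec, mulVec_mulVec, matrix_pow_intertwine h]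

lemma matrix_pow_mulVec_add (X : Matrix (Fin a) (Fin a) ℕ) (i j : ℕ) (v : Fin a → ℕ) :
    X ^ i *ᵥ (X ^ j *ᵥ v) = X ^ (i + j) *ᵥ v := by
  rw [mulVec_mulVec, ← pow_add]

lemma use_refl (A : Matrix (Fin a) (Fin a) ℕ) : UnitallyShiftEquivalent A A := by
  refine ⟨1, A, 1, ⟨le_refl 1, by simp, by simp, by simp, by simp⟩, 0, 1, ?_⟩
  simp

lemma use_symm {A : Matrix (Fin a) (Fin a) ℕ} {B : Matrix (Fin b) (Fin b) ℕ}
    (h : UnitallyShiftEquivalent A B) : UnitallyShiftEquivalent B A := by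
  obtain ⟨l, R, S, ⟨hl, hRS, hSR, hAR, hBS⟩, p, q, hu⟩ := h
  have hS : Aᵀ * Sᵀ = Sᵀ * Bᵀ := by
    rw [← transpose_mul, ← transpose_mul, hBS]
  refine ⟨l + q, S * A ^ q, R,
    ⟨le_trans hl (Nat.le_add_right l q), ?_, ?_, ?_, hAR⟩, ?_⟩
  · rw [Matrix.mul_assoc, matrix_pow_intertwine hAR, ← Matrix.mul_assoc, ← hSR, ← pow_add]
  · rw [← Matrix.mul_assoc, ← hRS, ← pow_add]
  · rw [← Matrix.mul_assoc, hBS, Matrix.mul_assoc, Matrix.mul_assoc, ← pow_succ, ← pow_succ']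
  · refine ⟨p, l, ?_⟩
    have h2 := congrArg (fun v => Sᵀ *ᵥ v) hu
    rw [← matrix_pow_intertwine_vec hS p, ← matrix_pow_intertwine_vec hS (p + q)] at h2
    rw [mulVec_mulVec (fun _ => 1) Sᵀ Rᵀ, ← transpose_mul, ← hRS, transpose_pow,
      matrix_pow_mulVec_add] at h2
    calc Aᵀ ^ p *ᵥ ((S * A ^ q)ᵀ *ᵥ fun _ => 1)
        = Aᵀ ^ p *ᵥ (Aᵀ ^ q *ᵥ (Sᵀ *ᵥ fun _ => 1)) := by
          rw [transpose_mul, transpose_pow, ← mulVec_mulVec]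
      _ = Aᵀ ^ (p + q) *ᵥ (Sᵀ *ᵥ fun _ => 1) := matrix_pow_mulVec_add ..
      _ = Aᵀ ^ (p + l) *ᵥ fun _ => 1 := h2.symm

lemma use_trans {A : Matrix (Fin a) (Fin a) ℕ} {B : Matrix (Fin b) (Fin b) ℕ}
    {C : Matrix (Fin c) (Fin c) ℕ}
    (h1 : UnitallyShiftEquivalent A B) (h2 : UnitallyShiftEquivalent B C) :
    UnitallyShiftEquivalent A C := by
  obtain ⟨l1, R1, S1, ⟨hl1, hRS1, hSR1, hAR1, hBS1⟩, p1, q1, hu1⟩ := h1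
  obtain ⟨l2, R2, S2, ⟨hl2, hRS2, hSR2, hAR2, hBS2⟩, p2, q2, hu2⟩ := h2
  have hR2 : Cᵀ * R2ᵀ = R2ᵀ * Bᵀ := by
    rw [← transpose_mul, ← transpose_mul, hAR2]
  refine ⟨l1 + l2, R1 * R2, S2 * S1, ⟨le_trans hl1 (Nat.le_add_right l1 l2), ?_, ?_, ?_, ?_⟩,
    p1 + p2, q1 + q2, ?_⟩
  · calc A ^ (l1 + l2) = A ^ l2 * A ^ l1 := by rw [← pow_add, add_comm]
      _ = A ^ l2 * (R1 * S1) := by rw [hRS1]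
      _ = (A ^ l2 * R1) * S1 := by rw [Matrix.mul_assoc]
      _ = (R1 * B ^ l2) * S1 := by rw [matrix_pow_intertwine hAR1]
      _ = (R1 * (R2 * S2)) * S1 := by rw [hRS2]
      _ = R1 * R2 * (S2 * S1) := by simp only [Matrix.mul_assoc]
  · calc C ^ (l1 + l2) = C ^ l2 * C ^ l1 := by rw [← pow_add, add_comm]
      _ = (S2 * R2) * C ^ l1 := by rw [hSR2]
      _ = S2 * (R2 * C ^ l1) := by rw [Matrix.mul_assoc]
      _ = S2 * (B ^ l1 * R2) := by rw [matrix_pow_intertwine hAR2]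
      _ = S2 * ((S1 * R1) * R2) := by rw [hSR1]
      _ = S2 * S1 * (R1 * R2) := by simp only [Matrix.mul_assoc]
  · rw [← Matrix.mul_assoc, hAR1, Matrix.mul_assoc, hAR2, Matrix.mul_assoc]
  · rw [← Matrix.mul_assoc, hBS2, Matrix.mul_assoc, hBS1, Matrix.mul_assoc]
  · calc Cᵀ ^ (p1 + p2) *ᵥ ((R1 * R2)ᵀ *ᵥ fun _ => 1)
        = Cᵀ ^ p2 *ᵥ (Cᵀ ^ p1 *ᵥ (R2ᵀ *ᵥ (R1ᵀ *ᵥ fun _ => 1))) := by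
          rw [matrix_pow_mulVec_add, add_comm p2 p1, transpose_mul, ← mulVec_mulVec]
      _ = Cᵀ ^ p2 *ᵥ (R2ᵀ *ᵥ (Bᵀ ^ p1 *ᵥ (R1ᵀ *ᵥ fun _ => 1))) := by
          rw [matrix_pow_intertwine_vec hR2 p1]
      _ = Cᵀ ^ p2 *ᵥ (R2ᵀ *ᵥ (Bᵀ ^ (p1 + q1) *ᵥ fun _ => 1)) := by rw [hu1]
      _ = Cᵀ ^ p2 *ᵥ (Cᵀ ^ (p1 + q1) *ᵥ (R2ᵀ *ᵥ fun _ => 1)) := by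
          rw [matrix_pow_intertwine_vec hR2 (p1 + q1)]
      _ = Cᵀ ^ (p1 + q1) *ᵥ (Cᵀ ^ p2 *ᵥ (R2ᵀ *ᵥ fun _ => 1)) := by
          rw [matrix_pow_mulVec_add, matrix_pow_mulVec_add, add_comm p2 (p1 + q1)]
      _ = Cᵀ ^ (p1 + q1) *ᵥ (Cᵀ ^ (p2 + q2) *ᵥ fun _ => 1) := by rw [hu2]
      _ = Cᵀ ^ (p1 + p2 + (q1 + q2)) *ᵥ fun _ => 1 := by
          rw [matrix_pow_mulVec_add,
            show p1 + q1 + (p2 + q2) = p1 + p2 + (q1 + q2) from by omega]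

lemma division_transpose_mulVec_one {D : Matrix (Fin a) (Fin b) ℕ}
    (hD : IsDivisionMatrix D) : Dᵀ *ᵥ (fun _ => (1 : ℕ)) = fun _ => 1 := by
  obtain ⟨h01, _, hcol⟩ := hD
  funext j
  obtain ⟨i0, hi0, huniq⟩ := hcol j
  simp only [mulVec, dotProduct, transpose_apply, mul_one]
  rw [Finset.sum_eq_single i0]
  · exact hi0
  · intro i _ hne
    rcases h01 i j with h | h
    · exact h
    · exact absurd (huniq i h) hne
  · intro h
    exact absurd (Finset.mem_univ i0) h

lemma use_of_outsplit {A : Matrix (Fin a) (Fin a) ℕ} {B : Matrix (Fin b) (Fin b) ℕ}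
    (h : IsOutsplit A B) : UnitallyShiftEquivalent A B := by
  obtain ⟨D, E, hD, hA, hB⟩ := h
  refine ⟨1, D, E, ⟨le_refl 1, by rw [pow_one, hA], by rw [pow_one, hB],
    by rw [hA, hB, Matrix.mul_assoc], by rw [hA, hB, Matrix.mul_assoc]⟩, 0, 0, ?_⟩
  rw [division_transpose_mulVec_one hD]

lemma use_of_balanced {A B : Matrix (Fin a) (Fin a) ℕ}
    (h : IsBalancedElementarySSE A B) : UnitallyShiftEquivalent A B := by
  obtain ⟨k, D, RA, RB, _, hA, hB, hbal⟩ := h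
  have hAB : A * B = B * B := by
    rw [hA, hB, Matrix.mul_assoc, ← Matrix.mul_assoc RA, hbal, Matrix.mul_assoc,
      ← Matrix.mul_assoc]
  have hBA : B * A = A * A := by
    rw [hA, hB, Matrix.mul_assoc, ← Matrix.mul_assoc RB, ← hbal, Matrix.mul_assoc,
      ← Matrix.mul_assoc]
  refine ⟨2, B, A, ⟨one_le_two, by rw [pow_two, ← hBA], by rw [pow_two, ← hAB],
    hAB, hBA⟩, 0, 1, ?_⟩
  simp

end AuxUSE

/-- Balanced strong shift equivalent matrices with no zero rows are
unitally shift equivalent. -/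
theorem balancedSSE_implies_unitallyShiftEquivalent
    {n m : ℕ} (A : Matrix (Fin n) (Fin n) ℕ) (B : Matrix (Fin m) (Fin m) ℕ)
    (hA : NoZeroRows A) (hB : NoZeroRows B)
    (h : BalancedSSE A B) :
    UnitallyShiftEquivalent A B := by
  have key : ∀ x y : (Σ n : ℕ, Matrix (Fin n) (Fin n) ℕ),
      Relation.EqvGen BalancedSSEStep x y → UnitallyShiftEquivalent x.2 y.2 := by
    intro x y hxy
    induction hxy with
    | rel x y hxy =>
      cases hxy with
      | balanced _ _ hb => exact use_of_balanced hb
      | outsplit _ _ ho => exact use_of_outsplit ho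
    | refl x => exact use_refl _
    | symm x y _ ih => exact use_symm ih
    | trans x y z _ _ ih1 ih2 => exact use_trans ih1 ih2
  exact key ⟨n, A⟩ ⟨m, B⟩ h
end

section
/- Let A (n×n) and B (m×m) be square ℕ-matrices. If A and B are shift equivalent, then sign(det(I − Aᵀ)) = sign(det(I − Bᵀ)), where sign(x) ∈ {−1, 0, 1}. -/
open Matrix

/-!
Shift equivalence gives `A ^ (j + l) = R * B ^ j * S` and `B ^ (j + l) = B ^ j * S * R`, so
`tr (A ^ k) = tr (B ^ k)` for every `k ≥ l`. Over `ℂ` these are the power sums of the eigenvalues,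
and power sums from some point on determine the nonzero eigenvalues with multiplicity, because
geometric sequences with distinct ratios are linearly independent. Since
`det (1 - A) = ∏ (1 - λ)` only sees the nonzero eigenvalues, `det (1 - A) = det (1 - B)`; and
transposing changes neither determinant.
-/

open Polynomial

@[to_additive]
theorem Finset.prod_multiset_map_count_of_subset {ι M : Type*} [DecidableEq ι] [CommMonoid M]
    (s : Multiset ι) (f : ι → M) {F : Finset ι} (hs : s.toFinset ⊆ F) :
    (s.map f).prod = ∏ m ∈ F, f m ^ s.count m := by
  rw [prod_multiset_map_count]
  refine prod_subset hs fun m _ hm => ?_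
  rw [Multiset.count_eq_zero_of_notMem (by simpa using hm), pow_zero]

theorem linearIndependent_geometric (K : Type*) [Field K] :
    LinearIndependent K (fun a : K => fun j : ℕ => a ^ j) :=
  LinearIndependent.of_comp (LinearMap.funLeft K K Multiplicative.toAdd) <|
    (linearIndependent_monoidHom (Multiplicative ℕ) K).comp (powersHom K) (powersHom K).injective

namespace Multiset

theorem prod_map_eq_of_count_eq {α M : Type*} [DecidableEq α] [CommMonoid M]
    {s t : Multiset α} {f : α → M} (h : ∀ a, f a ≠ 1 → s.count a = t.count a) :
    (s.map f).prod = (t.map f).prod := by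
  have hs : s.toFinset ⊆ (s + t).toFinset := by rw [toFinset_add]; exact Finset.subset_union_left
  have ht : t.toFinset ⊆ (s + t).toFinset := by rw [toFinset_add]; exact Finset.subset_union_right
  rw [Finset.prod_multiset_map_count_of_subset s f hs,
    Finset.prod_multiset_map_count_of_subset t f ht]
  refine Finset.prod_congr rfl fun a _ => ?_
  by_cases ha : f a = 1
  · simp [ha]
  · rw [h a ha]

theorem count_eq_of_sum_map_pow_eq {K : Type*} [Field K] [CharZero K] [DecidableEq K]
    {s t : Multiset K} {l : ℕ} (h : ∀ k ≥ l, (s.map (· ^ k)).sum = (t.map (· ^ k)).sum)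
    {a : K} (ha : a ≠ 0) : s.count a = t.count a := by
  set F := (s + t).toFinset
  have hs : s.toFinset ⊆ F := by simp only [F, toFinset_add, Finset.subset_union_left]
  have ht : t.toFinset ⊆ F := by simp only [F, toFinset_add, Finset.subset_union_right]
  by_cases haF : a ∉ F
  · rw [count_eq_zero_of_notMem fun h => haF (hs (by simpa using h)),
      count_eq_zero_of_notMem fun h => haF (ht (by simpa using h))]
  rw [not_not] at haF
  have hcomb : ∑ b ∈ F, (((s.count b : K) - t.count b) * b ^ l) • (fun j : ℕ => b ^ j) = 0 := by
    funext j
    have hj := h (l + j) le_self_add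
    rw [Finset.sum_multiset_map_count_of_subset _ _ hs,
      Finset.sum_multiset_map_count_of_subset _ _ ht, ← sub_eq_zero,
      ← Finset.sum_sub_distrib] at hj
    simp only [Finset.sum_apply, Pi.smul_apply, smul_eq_mul, Pi.zero_apply, ← hj]
    exact Finset.sum_congr rfl fun b _ => by rw [nsmul_eq_mul, nsmul_eq_mul, pow_add]; ring
  have hcoeff := linearIndependent_iff'.mp (linearIndependent_geometric K) F _ hcomb a haF
  rw [mul_eq_zero, sub_eq_zero] at hcoeff
  exact_mod_cast hcoeff.resolve_right (pow_ne_zero l ha)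

end Multiset

namespace Matrix

section Spectrum

variable {K ι : Type*} [Field K] [IsAlgClosed K] [Fintype ι] [DecidableEq ι] (M : Matrix ι ι K)

theorem card_roots_charpoly : M.charpoly.roots.card = Fintype.card ι := by
  rw [splits_iff_card_roots.mp (IsAlgClosed.splits _), charpoly_natDegree_eq_dim]

theorem det_sub_algebraMap_eq_prod_roots_charpoly (z : K) :
    det (M - algebraMap K _ z) = (M.charpoly.roots.map (· - z)).prod := by
  have hneg : M.charpoly.roots.map (· - z) = (M.charpoly.roots.map (z - ·)).map Neg.neg := by
    simp [Multiset.map_map]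
  rw [← neg_sub, det_neg, algebraMap_eq_diagonal, Pi.algebraMap_def, Algebra.algebraMap_self,
    RingHom.id_apply, ← scalar_apply, ← eval_charpoly,
    (IsAlgClosed.splits _).eval_eq_prod_roots_of_monic M.charpoly_monic, hneg,
    Multiset.prod_map_neg, Multiset.card_map, card_roots_charpoly]

theorem det_aeval_eq_prod_roots_charpoly (p : K[X]) :
    det (aeval M p) = (M.charpoly.roots.map p.eval).prod := by
  let φ : K[X] →* K := detMonoidHom.comp (aeval M : K[X] →ₐ[K] Matrix ι ι K).toMonoidHom
  have hC : φ (C p.leadingCoeff) = p.leadingCoeff ^ Fintype.card ι := by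
    simp [φ, algebraMap_eq_diagonal]
  have hlinear (z : K) : φ (X - C z) = (M.charpoly.roots.map (· - z)).prod := by
    show det (aeval M (X - C z)) = _
    rw [map_sub, aeval_X, aeval_C, det_sub_algebraMap_eq_prod_roots_charpoly]
  calc det (aeval M p) = φ p := rfl
    _ = φ (C p.leadingCoeff) * (p.roots.map fun z => φ (X - C z)).prod := by
        conv_lhs => rw [(IsAlgClosed.splits p).eq_prod_roots]
        rw [map_mul, map_multiset_prod, Multiset.map_map, Function.comp_def]
    _ = p.leadingCoeff ^ Fintype.card ι *
          (p.roots.map fun z => (M.charpoly.roots.map (· - z)).prod).prod := by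
        simp only [hC, hlinear]
    _ = (M.charpoly.roots.map fun r => p.leadingCoeff * (p.roots.map (r - ·)).prod).prod := by
        rw [Multiset.prod_map_mul, Multiset.map_const', Multiset.prod_replicate,
          card_roots_charpoly, Multiset.prod_map_prod_map]
    _ = (M.charpoly.roots.map p.eval).prod := by
        simp only [← (IsAlgClosed.splits p).eval_eq_prod_roots]

theorem charpoly_aeval_eq_prod_roots_charpoly (p : K[X]) :
    (aeval M p).charpoly = ((M.charpoly.roots.map p.eval).map (X - C ·)).prod := by
  refine Polynomial.funext fun t => ?_
  rw [eval_charpoly, scalar_apply, ← Algebra.algebraMap_self_apply t, ← Pi.algebraMap_def,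
    ← algebraMap_eq_diagonal, ← aeval_C M t, ← map_sub, det_aeval_eq_prod_roots_charpoly,
    eval_multiset_prod, Multiset.map_map, Multiset.map_map]
  simp [Function.comp_def]

theorem trace_pow_eq_sum_roots_charpoly (k : ℕ) :
    trace (M ^ k) = (M.charpoly.roots.map (· ^ k)).sum := by
  rw [trace_eq_sum_roots_charpoly, ← aeval_X_pow (R := K), charpoly_aeval_eq_prod_roots_charpoly,
    roots_multiset_prod_X_sub_C]
  simp

theorem det_one_sub_eq_prod_roots_charpoly :
    det (1 - M) = (M.charpoly.roots.map (1 - ·)).prod := by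
  have h := det_aeval_eq_prod_roots_charpoly M (1 - X)
  simpa only [map_sub, map_one, aeval_X, eval_sub, eval_one, eval_X] using h

end Spectrum

theorem det_one_sub_eq_of_trace_pow_eq {K ι κ : Type*} [Field K] [IsAlgClosed K] [CharZero K]
    [Fintype ι] [DecidableEq ι] [Fintype κ] [DecidableEq κ]
    {M : Matrix ι ι K} {N : Matrix κ κ K} {l : ℕ} (h : ∀ k ≥ l, trace (M ^ k) = trace (N ^ k)) :
    det (1 - M) = det (1 - N) := by
  classical
  rw [det_one_sub_eq_prod_roots_charpoly, det_one_sub_eq_prod_roots_charpoly]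
  refine Multiset.prod_map_eq_of_count_eq fun a ha => Multiset.count_eq_of_sum_map_pow_eq (l := l)
    (fun k hk => ?_) (by rintro rfl; simp at ha)
  rw [← trace_pow_eq_sum_roots_charpoly, ← trace_pow_eq_sum_roots_charpoly]
  exact h k hk

theorem pow_mul_eq_mul_pow_of_mul_eq_mul {α m n : Type*} [Semiring α] [Fintype m] [DecidableEq m]
    [Fintype n] [DecidableEq n] {A : Matrix m m α} {B : Matrix n n α} {R : Matrix m n α}
    (h : A * R = R * B) (j : ℕ) : A ^ j * R = R * B ^ j := by
  induction j with
  | zero => simp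
  | succ j ih =>
    rw [pow_succ, pow_succ, Matrix.mul_assoc, h, ← Matrix.mul_assoc, ih, Matrix.mul_assoc]

theorem det_one_sub_transpose {R n : Type*} [CommRing R] [Fintype n] [DecidableEq n]
    (M : Matrix n n R) : det (1 - Mᵀ) = det (1 - M) := by
  rw [← det_transpose, transpose_sub, transpose_one, transpose_transpose]

end Matrix

namespace IsShiftEquivalence

variable {n m l : ℕ} {A : Matrix (Fin n) (Fin n) ℕ} {B : Matrix (Fin m) (Fin m) ℕ}
  {R : Matrix (Fin n) (Fin m) ℕ} {S : Matrix (Fin m) (Fin n) ℕ}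

theorem trace_pow_eq (hSE : IsShiftEquivalence A B R S l) {k : ℕ} (hk : l ≤ k) :
    trace (A ^ k) = trace (B ^ k) := by
  obtain ⟨-, hA, hB, hAR, -⟩ := hSE
  obtain ⟨j, rfl⟩ := Nat.exists_eq_add_of_le' hk
  calc trace (A ^ (j + l)) = trace (R * (B ^ j * S)) := by
        rw [pow_add, hA, ← Matrix.mul_assoc, pow_mul_eq_mul_pow_of_mul_eq_mul hAR,
          Matrix.mul_assoc]
    _ = trace (B ^ j * S * R) := trace_mul_comm _ _
    _ = trace (B ^ (j + l)) := by rw [Matrix.mul_assoc, ← hB, pow_add]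

theorem det_one_sub_eq (hSE : IsShiftEquivalence A B R S l) :
    det (1 - A.map (Nat.cast : ℕ → ℤ)) = det (1 - B.map (Nat.cast : ℕ → ℤ)) := by
  have cast_det {p : ℕ} (M : Matrix (Fin p) (Fin p) ℕ) :
      ((det (1 - M.map (Nat.cast : ℕ → ℤ)) : ℤ) : ℂ) = det (1 - M.map (Nat.cast : ℕ → ℂ)) := by
    have h := (Int.castRingHom ℂ).map_det (1 - M.map (Nat.cast : ℕ → ℤ))
    rw [_root_.map_sub, _root_.map_one, RingHom.mapMatrix_apply, Matrix.map_map] at h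
    simpa [Function.comp_def] using h
  have cast_trace {p : ℕ} (M : Matrix (Fin p) (Fin p) ℕ) (k : ℕ) :
      trace (M.map (Nat.cast : ℕ → ℂ) ^ k) = ((trace (M ^ k) : ℕ) : ℂ) := by
    rw [← Nat.coe_castRingHom, ← Matrix.map_pow, AddMonoidHom.map_trace]
  refine Int.cast_injective (α := ℂ) ?_
  rw [cast_det, cast_det]
  exact det_one_sub_eq_of_trace_pow_eq fun k hk => by
    rw [cast_trace, cast_trace, hSE.trace_pow_eq hk]

end IsShiftEquivalence

/-- **Statement 6.** The sign of `det (I - Aᵀ)` is invariant under shift equivalence. -/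
theorem sign_det_invariant_of_shiftEquivalent
    {n m : ℕ} (A : Matrix (Fin n) (Fin n) ℕ) (B : Matrix (Fin m) (Fin m) ℕ)
    (h : ShiftEquivalent A B) :
    Int.sign (Matrix.det (1 - (A.map (Nat.cast : ℕ → ℤ))ᵀ)) =
      Int.sign (Matrix.det (1 - (B.map (Nat.cast : ℕ → ℤ))ᵀ)) := by
  obtain ⟨l, R, S, hSE⟩ := h
  rw [det_one_sub_transpose, det_one_sub_transpose, hSE.det_one_sub_eq]
end

section
/- Let A (n×n) and B (m×m) be square ℕ-matrices and let (R,S) be a shift equivalence from A to B. Then Rᵀ maps the subgroup (I − Aᵀ)ℤⁿ into (I − Bᵀ)ℤᵐ, and the induced map Ř : BF(A) → BF(B), Ř(v + (I−Aᵀ)ℤⁿ) = Rᵀ v + (I−Bᵀ)ℤᵐ, is a well-defined group isomorphism whose inverse is the map Š : BF(B) → BF(A) induced by Sᵀ, i.e., Š(w + (I−Bᵀ)ℤᵐ) = Sᵀ w + (I−Aᵀ)ℤⁿ. -/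
open Matrix

/-- The subgroup `(I - Aᵀ)ℤⁿ` of `ℤⁿ`. -/
def BFSubgroup {n : ℕ} (A : Matrix (Fin n) (Fin n) ℕ) : AddSubgroup (Fin n → ℤ) :=
  AddMonoidHom.range
    (Matrix.mulVecLin (1 - (A.map (Nat.cast : ℕ → ℤ))ᵀ)).toAddMonoidHom

/-- The Bowen–Franks group `BF(A) = ℤⁿ/(I - Aᵀ)ℤⁿ`. -/
def BFGroup {n : ℕ} (A : Matrix (Fin n) (Fin n) ℕ) : Type :=
  (Fin n → ℤ) ⧸ BFSubgroup A

instance {n : ℕ} (A : Matrix (Fin n) (Fin n) ℕ) : AddCommGroup (BFGroup A) :=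
  QuotientAddGroup.Quotient.addCommGroup (BFSubgroup A)

/-- The class of `v ∈ ℤⁿ` in the Bowen–Franks group of `A`. -/
def BFGroup.mk {n : ℕ} (A : Matrix (Fin n) (Fin n) ℕ) (v : Fin n → ℤ) : BFGroup A :=
  QuotientAddGroup.mk v

/-!
Since `A R = R B`, the transpose `Rᵀ` intertwines `I - Aᵀ` with `I - Bᵀ` and so descends to the
Bowen–Franks groups; likewise for `Sᵀ`. The composite `Sᵀ Rᵀ = (Aᵀ)^ℓ` acts trivially on
`BF(A)`, because `v - (Aᵀ)^ℓ v = (I - Aᵀ)(I + Aᵀ + ⋯ + (Aᵀ)^(ℓ-1)) v`; symmetrically for `BF(B)`.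
-/

theorem Matrix.sub_pow_mulVec_eq_one_sub_mulVec {ι R : Type*} [Fintype ι] [DecidableEq ι]
    [Ring R] (T : Matrix ι ι R) (l : ℕ) (v : ι → R) :
    v - (T ^ l) *ᵥ v = (1 - T) *ᵥ ((∑ i ∈ Finset.range l, T ^ i) *ᵥ v) := by
  rw [mulVec_mulVec, mul_neg_geom_sum, sub_mulVec, one_mulVec]

section NatCast

variable {ι κ μ : Type*} [Fintype κ]

theorem Matrix.map_natCast_mul (M : Matrix ι κ ℕ) (N : Matrix κ μ ℕ) :
    (M * N).map (Nat.cast : ℕ → ℤ) =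
      M.map (Nat.cast : ℕ → ℤ) * N.map (Nat.cast : ℕ → ℤ) :=
  Matrix.map_mul (f := Nat.castRingHom ℤ)

theorem Matrix.map_natCast_pow [DecidableEq κ] (M : Matrix κ κ ℕ) (l : ℕ) :
    (M ^ l).map (Nat.cast : ℕ → ℤ) = M.map (Nat.cast : ℕ → ℤ) ^ l :=
  Matrix.map_pow M (Nat.castRingHom ℤ) l

end NatCast

namespace BFGroup

variable {n m : ℕ} {A : Matrix (Fin n) (Fin n) ℕ} {B : Matrix (Fin m) (Fin m) ℕ}

theorem mk_surjective : Function.Surjective (mk A) :=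
  QuotientAddGroup.mk_surjective

theorem mulVec_mem_BFSubgroup {R : Matrix (Fin n) (Fin m) ℕ} (hAR : A * R = R * B)
    {v : Fin n → ℤ} (hv : v ∈ BFSubgroup A) :
    (R.map (Nat.cast : ℕ → ℤ))ᵀ *ᵥ v ∈ BFSubgroup B := by
  obtain ⟨u, rfl⟩ := hv
  refine ⟨(R.map (Nat.cast : ℕ → ℤ))ᵀ *ᵥ u, ?_⟩
  have hcomm : (1 - (B.map (Nat.cast : ℕ → ℤ))ᵀ) * (R.map (Nat.cast : ℕ → ℤ))ᵀ =
      (R.map (Nat.cast : ℕ → ℤ))ᵀ * (1 - (A.map (Nat.cast : ℕ → ℤ))ᵀ) := by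
    rw [Matrix.sub_mul, Matrix.mul_sub, Matrix.one_mul, Matrix.mul_one, ← transpose_mul,
      ← transpose_mul, ← map_natCast_mul, ← map_natCast_mul, hAR]
  simp only [LinearMap.toAddMonoidHom_coe, mulVecLin_apply, mulVec_mulVec, hcomm]

def map (R : Matrix (Fin n) (Fin m) ℕ) (hAR : A * R = R * B) : BFGroup A →+ BFGroup B :=
  QuotientAddGroup.map _ _ (mulVecLin (R.map (Nat.cast : ℕ → ℤ))ᵀ).toAddMonoidHom
    fun _ hv => mulVec_mem_BFSubgroup hAR hv

theorem map_mk (R : Matrix (Fin n) (Fin m) ℕ) (hAR : A * R = R * B) (v : Fin n → ℤ) :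
    map R hAR (mk A v) = mk B ((R.map (Nat.cast : ℕ → ℤ))ᵀ *ᵥ v) :=
  rfl

theorem mk_pow_mulVec (A : Matrix (Fin n) (Fin n) ℕ) (l : ℕ) (v : Fin n → ℤ) :
    mk A (((A.map (Nat.cast : ℕ → ℤ))ᵀ ^ l) *ᵥ v) = mk A v :=
  QuotientAddGroup.eq.mpr <| by
    rw [neg_add_eq_sub, sub_pow_mulVec_eq_one_sub_mulVec]
    exact ⟨_, rfl⟩

theorem map_map_of_mul_eq_pow {R : Matrix (Fin n) (Fin m) ℕ} {S : Matrix (Fin m) (Fin n) ℕ}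
    {l : ℕ} (hAR : A * R = R * B) (hBS : B * S = S * A) (hRS : R * S = A ^ l)
    (x : BFGroup A) : map S hBS (map R hAR x) = x := by
  obtain ⟨v, rfl⟩ := mk_surjective x
  rw [map_mk, map_mk, mulVec_mulVec, ← transpose_mul, ← map_natCast_mul, hRS,
    map_natCast_pow, transpose_pow, mk_pow_mulVec]

def equivOfShiftEquivalence {R : Matrix (Fin n) (Fin m) ℕ} {S : Matrix (Fin m) (Fin n) ℕ}
    {l : ℕ} (hAR : A * R = R * B) (hBS : B * S = S * A) (hRS : R * S = A ^ l)
    (hSR : S * R = B ^ l) : BFGroup A ≃+ BFGroup B :=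
  AddEquiv.mk' ⟨map R hAR, map S hBS, map_map_of_mul_eq_pow hAR hBS hRS,
    map_map_of_mul_eq_pow hBS hAR hSR⟩ (map R hAR).map_add

end BFGroup

/-- **Statement 7.** If `(R,S)` is a shift equivalence from `A` to `B`, then `Rᵀ` maps
`(I - Aᵀ)ℤⁿ` into `(I - Bᵀ)ℤᵐ`, and the induced map `Ř : BF(A) → BF(B)`,
`v + (I-Aᵀ)ℤⁿ ↦ Rᵀ v + (I-Bᵀ)ℤᵐ`, is a well-defined group isomorphism whose inverse is
the map induced by `Sᵀ`. -/
theorem shiftEquivalence_induces_BowenFranks_isomorphism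
    {n m : ℕ} (A : Matrix (Fin n) (Fin n) ℕ) (B : Matrix (Fin m) (Fin m) ℕ)
    (R : Matrix (Fin n) (Fin m) ℕ) (S : Matrix (Fin m) (Fin n) ℕ) (l : ℕ)
    (hSE : IsShiftEquivalence A B R S l) :
    (∀ v ∈ BFSubgroup A, (R.map (Nat.cast : ℕ → ℤ))ᵀ *ᵥ v ∈ BFSubgroup B) ∧
    ∃ Rcheck : BFGroup A ≃+ BFGroup B,
      (∀ v : Fin n → ℤ,
        Rcheck (BFGroup.mk A v) = BFGroup.mk B ((R.map (Nat.cast : ℕ → ℤ))ᵀ *ᵥ v)) ∧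
      (∀ w : Fin m → ℤ,
        Rcheck.symm (BFGroup.mk B w) = BFGroup.mk A ((S.map (Nat.cast : ℕ → ℤ))ᵀ *ᵥ w)) := by
  obtain ⟨-, hRS, hSR, hAR, hBS⟩ := hSE
  exact ⟨fun _ => BFGroup.mulVec_mem_BFSubgroup hAR,
    BFGroup.equivOfShiftEquivalence hAR hBS hRS.symm hSR.symm,
    BFGroup.map_mk R hAR, BFGroup.map_mk S hBS⟩
end

section
/- Let A and B be square ℕ-matrices with no zero rows. If the one-sided edge shifts (X_A, σ_A) and (X_B, σ_B) are Matsumoto eventually conjugate, then A and B are unitally shift equivalent. -/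
open Matrix

/-- The edge set of the graph of `A`: `A i j` edges from vertex `i` to vertex `j`.
The source of an edge `⟨i, j, e⟩` is `i` and its range is `j`. -/
def EdgeType {n : ℕ} (A : Matrix (Fin n) (Fin n) ℕ) : Type :=
  (i : Fin n) × (j : Fin n) × Fin (A i j)

/-- The edge set carries the discrete topology. -/
instance {n : ℕ} (A : Matrix (Fin n) (Fin n) ℕ) : TopologicalSpace (EdgeType A) := ⊥

/-- The one-sided edge shift space `X_A`, a subspace of the product space `(E¹)^ℕ`. -/
def ShiftSpace {n : ℕ} (A : Matrix (Fin n) (Fin n) ℕ) : Type :=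
  { x : ℕ → EdgeType A // ∀ i : ℕ, (x i).2.1 = (x (i + 1)).1 }

instance {n : ℕ} (A : Matrix (Fin n) (Fin n) ℕ) : TopologicalSpace (ShiftSpace A) :=
  instTopologicalSpaceSubtype

/-- The shift map `σ_A : X_A → X_A`. -/
def shiftMap {n : ℕ} (A : Matrix (Fin n) (Fin n) ℕ) : ShiftSpace A → ShiftSpace A :=
  fun x => ⟨fun i => x.1 (i + 1), fun i => x.2 (i + 1)⟩

/-- A point `x` is eventually periodic for `σ` if `σ^p x = σ^q x` for some distinct `p, q`. -/
def EventuallyPeriodic {X : Type*} (σ : X → X) (x : X) : Prop :=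
  ∃ p q : ℕ, p ≠ q ∧ σ^[p] x = σ^[q] x

/-!
For `U ⊆ X_M` let `wordCount n U u` be the number of paths of length `n + 1` ending at the vertex
`u` that are initial blocks of points of `U`. By compactness and the eventual conjugacy relation,
the first `n` edges of `h x` depend only on the first `n + w` edges of `x`, and likewise for `h⁻¹`
with `w'`. Hence for `N = l + w + w'` the images `h(Z_i)` of the vertex cylinders depend only on
the first `N + 1` edges, and we put `R i u = wordCount N (h(Z_i)) u`,
`S u i = wordCount N (h⁻¹(Z_u)) i`.

Everything rests on one identity. Cut `U` into the cylinders `Z_q` of its initial blocks `q` of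
length `c + 1`; then `h ∘ σ^(c+1) ∘ h⁻¹` maps `h(Z_q)` bijectively onto `h(Z_{r(q)})` and shifts
every coordinate from `l` on by `c + 1`, which matches the counted words, so
`wordCount (N + c + 1) (h U) = ∑ v, wordCount c U v * wordCount N (h(Z_v))`. For `h = id` this is
`wordCount (n + 1) U = wordCount n U * M`, whence `wordCount n Z_i = (M ^ (n + 1)) i`. With
`U = Z_i`, `c = 0` it gives `A R = R B`; with `h⁻¹`, `U = h(Z_i)`, `c = N` it gives
`A ^ (2N + 2) = R S`. Finally `∑ i, R i u` counts all paths of length `N + 1` of `X_B` ending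
at `u`, i.e. `Rᵀ 𝟙 = (Bᵀ) ^ (N + 1) 𝟙`.
-/

open Set PiNat

lemma Set.ncard_image_eq_ncard_image {α β γ : Type*} {f : α → β} {g : α → γ} {s : Set α}
    (h : ∀ x ∈ s, ∀ y ∈ s, f x = f y ↔ g x = g y) : (f '' s).ncard = (g '' s).ncard := by
  refine ncard_congr (fun b hb => g hb.choose) (fun b hb => ⟨_, hb.choose_spec.1, rfl⟩) ?_ ?_
  · intro b b' hb hb' hbb'
    rw [← hb.choose_spec.2, ← hb'.choose_spec.2]
    exact (h _ hb.choose_spec.1 _ hb'.choose_spec.1).2 hbb'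
  · rintro _ ⟨x, hx, rfl⟩
    have hfx : f x ∈ f '' s := mem_image_of_mem f hx
    exact ⟨f x, hfx, (h _ hfx.choose_spec.1 _ hx).1 hfx.choose_spec.2⟩

namespace ShiftSpace

variable {k n : ℕ} {M : Matrix (Fin k) (Fin k) ℕ}

instance : DiscreteTopology (EdgeType M) := ⟨rfl⟩

instance : Fintype (EdgeType M) := by
  unfold EdgeType
  have : ∀ i j : Fin k, Fintype (Fin (M i j)) := fun _ _ => inferInstance
  infer_instance

@[simp]
lemma iterate_shiftMap_coord (n : ℕ) (x : ShiftSpace M) (j : ℕ) :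
    ((shiftMap M)^[n] x).1 j = x.1 (n + j) := by
  induction n generalizing x with
  | zero => simp
  | succ n ih =>
    rw [Function.iterate_succ_apply, ih]
    exact congrArg x.1 (by omega)

lemma eq_of_mem_cylinder_of_iterate_eq {x y : ShiftSpace M} (hxy : y.1 ∈ cylinder x.1 n)
    (h : (shiftMap M)^[n] x = (shiftMap M)^[n] y) : x = y := by
  refine Subtype.ext (funext fun j => ?_)
  rcases lt_or_ge j n with hj | hj
  · exact (hxy j hj).symm
  · simpa [Nat.add_sub_cancel' hj] using congrArg (fun z : ShiftSpace M => z.1 (j - n)) h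

lemma continuous_coord (j : ℕ) : Continuous fun x : ShiftSpace M => x.1 j :=
  (continuous_apply j).comp continuous_subtype_val

instance : CompactSpace (ShiftSpace M) := by
  have hclosed : IsClosed {x : ℕ → EdgeType M | ∀ i, (x i).2.1 = (x (i + 1)).1} := by
    simp only [ofPred_forall]
    exact isClosed_iInter fun i => isClosed_eq
      ((continuous_of_discreteTopology (f := fun e : EdgeType M => e.2.1)).comp
        (continuous_apply i))
      ((continuous_of_discreteTopology (f := fun e : EdgeType M => e.1)).comp
        (continuous_apply (i + 1)))
  exact isCompact_iff_compactSpace.mp hclosed.isCompact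

def block (x : ShiftSpace M) (n : ℕ) : Fin (n + 1) → EdgeType M := fun j => x.1 j

def lastVertex (q : Fin (n + 1) → EdgeType M) : Fin k := (q (Fin.last n)).2.1

lemma block_eq_block_iff {x y : ShiftSpace M} :
    x.block n = y.block n ↔ y.1 ∈ cylinder x.1 (n + 1) :=
  ⟨fun h j hj => (congrFun h ⟨j, hj⟩).symm, fun h => funext fun j => (h j j.isLt).symm⟩

variable (M) in
def vertexCylinder (i : Fin k) : Set (ShiftSpace M) := {x | (x.1 0).1 = i}

lemma pairwiseDisjoint_vertexCylinder (s : Set (Fin k)) :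
    s.PairwiseDisjoint (vertexCylinder M) :=
  fun _ _ _ _ hij => disjoint_left.2 fun _ hx hy => hij (hx.symm.trans hy)

lemma iUnion_vertexCylinder : ⋃ i ∈ (Finset.univ : Finset (Fin k)), vertexCylinder M i = univ :=
  eq_univ_of_forall fun x => mem_iUnion₂.2 ⟨(x.1 0).1, Finset.mem_univ _, rfl⟩

def DependsOnFirst (n : ℕ) (U : Set (ShiftSpace M)) : Prop :=
  ∀ x ∈ U, ∀ y : ShiftSpace M, y.1 ∈ cylinder x.1 n → y ∈ U

lemma DependsOnFirst.mono {m : ℕ} {U : Set (ShiftSpace M)} (hU : DependsOnFirst m U)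
    (hmn : m ≤ n) : DependsOnFirst n U :=
  fun x hx y hy => hU x hx y (cylinder_anti _ hmn hy)

lemma dependsOnFirst_vertexCylinder (i : Fin k) :
    DependsOnFirst 1 (vertexCylinder M i) := by
  intro x hx y hy
  show (y.1 0).1 = i
  rwa [hy 0 one_pos]

lemma dependsOnFirst_block (n : ℕ) (q : Fin (n + 1) → EdgeType M) :
    DependsOnFirst (n + 1) {x : ShiftSpace M | x.block n = q} := by
  intro x hx y hy
  rw [mem_ofPred_eq, ← hx, block_eq_block_iff]
  exact fun j hj => (hy j hj).symm

section Concat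

def concat (n : ℕ) (x z : ShiftSpace M) (h : (x.1 n).2.1 = (z.1 0).1) : ShiftSpace M :=
  ⟨fun j => if j ≤ n then x.1 j else z.1 (j - (n + 1)), fun j => by
    dsimp only
    rcases lt_trichotomy j n with hj | rfl | hj
    · rw [if_pos hj.le, if_pos (by omega)]
      exact x.2 j
    · rw [if_pos le_rfl, if_neg (by omega), Nat.sub_self]
      exact h
    · rw [if_neg (by omega), if_neg (by omega), show j + 1 - (n + 1) = j - (n + 1) + 1 by omega]
      exact z.2 _⟩

variable {x z : ShiftSpace M} {h : (x.1 n).2.1 = (z.1 0).1}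

lemma concat_mem_cylinder : (concat n x z h).1 ∈ cylinder x.1 (n + 1) :=
  fun _ hj => if_pos (Nat.le_of_lt_succ hj)

lemma concat_coord_of_lt {j : ℕ} (hj : n < j) : (concat n x z h).1 j = z.1 (j - (n + 1)) :=
  if_neg (by omega)

lemma iterate_shiftMap_concat : (shiftMap M)^[n + 1] (concat n x z h) = z :=
  Subtype.ext <| funext fun j => by
    rw [iterate_shiftMap_coord, concat_coord_of_lt (by omega), Nat.add_sub_cancel_left]

end Concat

lemma image_iterate_shiftMap_block (n : ℕ) (x : ShiftSpace M) :
    (shiftMap M)^[n + 1] '' {y | y.block n = x.block n} = vertexCylinder M (x.1 n).2.1 := by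
  ext z
  constructor
  · rintro ⟨y, hy, rfl⟩
    rw [vertexCylinder, mem_ofPred_eq, iterate_shiftMap_coord, add_zero, ← y.2 n]
    exact congrArg (fun q => (q (Fin.last n)).2.1) hy
  · intro hz
    refine ⟨concat n x z hz.symm, ?_, iterate_shiftMap_concat⟩
    exact (block_eq_block_iff.2 concat_mem_cylinder).symm

lemma injOn_iterate_shiftMap_block (n : ℕ) (q : Fin (n + 1) → EdgeType M) :
    InjOn (shiftMap M)^[n + 1] {y | y.block n = q} := fun _ hx _ hy hxy =>
  eq_of_mem_cylinder_of_iterate_eq (block_eq_block_iff.1 (hx.trans hy.symm)) hxy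

lemma exists_coord_zero_eq (hM : NoZeroRows M) (e : EdgeType M) :
    ∃ x : ShiftSpace M, x.1 0 = e := by
  choose next hnext using hM
  exact ⟨⟨fun t => Nat.rec e (fun _ f => ⟨f.2.1, next f.2.1, 0, Nat.pos_of_ne_zero (hnext _)⟩) t,
    fun _ => rfl⟩, rfl⟩

noncomputable def prefixes (n : ℕ) (U : Set (ShiftSpace M)) : Finset (Fin (n + 1) → EdgeType M) :=
  (toFinite ((·.block n) '' U)).toFinset

noncomputable def wordCount (n : ℕ) (U : Set (ShiftSpace M)) (u : Fin k) : ℕ :=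
  ((prefixes n U).filter fun q => lastVertex q = u).card

lemma mem_prefixes {U : Set (ShiftSpace M)} {q : Fin (n + 1) → EdgeType M} :
    q ∈ prefixes n U ↔ ∃ x ∈ U, x.block n = q := by
  simp [prefixes]

lemma wordCount_eq_ncard (U : Set (ShiftSpace M)) (u : Fin k) :
    wordCount n U u = ((·.block n) '' {x ∈ U | (x.1 n).2.1 = u}).ncard := by
  rw [ncard_eq_toFinset_card _ (toFinite _), wordCount]
  congr 1
  ext q
  simp only [Finset.mem_filter, mem_prefixes, Finite.mem_toFinset, mem_image, mem_ofPred_eq]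
  constructor
  · rintro ⟨⟨x, hx, rfl⟩, hq⟩
    exact ⟨x, ⟨hx, hq⟩, rfl⟩
  · rintro ⟨x, ⟨hx, hq⟩, rfl⟩
    exact ⟨⟨x, hx, rfl⟩, hq⟩

lemma DependsOnFirst.eq_biUnion_block {U : Set (ShiftSpace M)} (hU : DependsOnFirst (n + 1) U) :
    U = ⋃ q ∈ prefixes n U, {x | x.block n = q} := by
  ext y
  simp only [mem_iUnion₂, mem_prefixes, mem_ofPred_eq]
  refine ⟨fun hy => ⟨_, ⟨y, hy, rfl⟩, rfl⟩, ?_⟩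
  rintro ⟨_, ⟨x, hx, rfl⟩, hxy⟩
  exact hU x hx y (block_eq_block_iff.1 hxy.symm)

lemma wordCount_biUnion {ι : Type*} (s : Finset ι) {U : ι → Set (ShiftSpace M)}
    (hdisj : (s : Set ι).PairwiseDisjoint U) (hU : ∀ i ∈ s, DependsOnFirst (n + 1) (U i))
    (u : Fin k) : wordCount n (⋃ i ∈ s, U i) u = ∑ i ∈ s, wordCount n (U i) u := by
  classical
  have hprefixes : prefixes n (⋃ i ∈ s, U i) = s.biUnion fun i => prefixes n (U i) := by
    ext q
    simp only [mem_prefixes, Finset.mem_biUnion, mem_iUnion₂]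
    aesop
  rw [wordCount, hprefixes, Finset.filter_biUnion, Finset.card_biUnion]
  · rfl
  intro i hi j hj hij
  refine Finset.disjoint_left.2 fun q hqi hqj => ?_
  obtain ⟨x, hx, rfl⟩ := mem_prefixes.1 (Finset.mem_filter.1 hqi).1
  obtain ⟨y, hy, hxy⟩ := mem_prefixes.1 (Finset.mem_filter.1 hqj).1
  exact disjoint_left.1 (hdisj hi hj hij) hx (hU j hj y hy x (block_eq_block_iff.1 hxy))

lemma sum_prefixes_lastVertex (U : Set (ShiftSpace M)) (f : Fin k → ℕ) :
    ∑ q ∈ prefixes n U, f (lastVertex q) = ∑ v, wordCount n U v * f v := by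
  rw [← Finset.sum_fiberwise' (prefixes n U) lastVertex f]
  simp only [Finset.sum_const, smul_eq_mul, wordCount]

lemma wordCount_image_eq_of_injOn {θ : ShiftSpace M → ShiftSpace M} {V : Set (ShiftSpace M)}
    {l d T : ℕ}
    (hlT : l ≤ T) (hV : DependsOnFirst (T + d + 1) V) (hθ : InjOn θ V)
    (htail : ∀ x ∈ V, ∀ j, l ≤ j → (θ x).1 j = x.1 (j + d))
    (hhead : ∀ x ∈ V, ∀ y ∈ V, y.1 ∈ cylinder x.1 (T + d + 1) → (θ y).1 ∈ cylinder (θ x).1 l)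
    (u : Fin k) : wordCount T (θ '' V) u = wordCount (T + d) V u := by
  have himage : {y ∈ θ '' V | (y.1 T).2.1 = u} = θ '' {x ∈ V | (x.1 (T + d)).2.1 = u} := by
    ext y
    constructor
    · rintro ⟨⟨x, hx, rfl⟩, hu⟩
      exact ⟨x, ⟨hx, by rwa [htail x hx T hlT] at hu⟩, rfl⟩
    · rintro ⟨x, ⟨hx, hu⟩, rfl⟩
      exact ⟨⟨x, hx, rfl⟩, by rwa [htail x hx T hlT]⟩
  rw [wordCount_eq_ncard, wordCount_eq_ncard, himage, image_image]
  refine ncard_image_eq_ncard_image fun x ⟨hx, hxu⟩ y ⟨hy, hyu⟩ => ?_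
  rw [block_eq_block_iff, block_eq_block_iff]
  constructor
  · intro hθxy
    -- `z` agrees with `y` up to `T + d` and with `x` afterwards, so `θ z = θ x`.
    set z := concat (T + d) y ((shiftMap M)^[T + d + 1] x)
      (by rw [iterate_shiftMap_coord, add_zero, ← x.2, hxu, hyu])
    have hzy : z.1 ∈ cylinder y.1 (T + d + 1) := concat_mem_cylinder
    have hz : z ∈ V := hV y hy z hzy
    have hθz : θ z = θ x := by
      refine Subtype.ext (funext fun j => ?_)
      rcases lt_or_ge j l with hjl | hjl
      · exact (hhead y hy z hz hzy j hjl).trans (hθxy j (by omega))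
      rw [htail z hz j hjl, htail x hx j hjl]
      rcases le_or_gt j T with hjT | hjT
      · rw [hzy (j + d) (by omega), ← htail y hy j hjl, hθxy j (by omega), htail x hx j hjl]
      · rw [concat_coord_of_lt (by omega), iterate_shiftMap_coord]
        exact congrArg x.1 (by omega)
    rw [← hθ hz hx hθz]
    exact fun j hj => (hzy j hj).symm
  · intro hxy j hj
    rcases lt_or_ge j l with hjl | hjl
    · exact hhead x hx y hy hxy j hjl
    · rw [htail y hy j hjl, htail x hx j hjl]
      exact hxy (j + d) (by omega)

lemma exists_forall_mem_cylinder_eq {D : Type*} [TopologicalSpace D] [DiscreteTopology D]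
    (f : ShiftSpace M → D) (hf : Continuous f) :
    ∃ w, ∀ x y : ShiftSpace M, y.1 ∈ cylinder x.1 w → f y = f x := by
  have hlocal : ∀ x : ShiftSpace M, ∃ n, ∀ y : ShiftSpace M, y.1 ∈ cylinder x.1 n → f y = f x := by
    intro x
    obtain ⟨V, hV, hVf⟩ := isOpen_induced_iff.1 ((isOpen_discrete {f x}).preimage hf)
    have hxV : x.1 ∈ V := (Set.ext_iff.1 hVf x).2 rfl
    obtain ⟨_, ⟨z, n, rfl⟩, hxz, hzV⟩ :=
      (isTopologicalBasis_cylinders fun _ => EdgeType M).exists_subset_of_mem_open hxV hV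
    refine ⟨n, fun y hy => ?_⟩
    exact (Set.ext_iff.1 hVf y).1 (hzV (mem_cylinder_iff_eq.1 hxz ▸ hy))
  choose n hn using hlocal
  obtain ⟨t, ht⟩ := (isCompact_univ (X := ShiftSpace M)).elim_finite_subcover
    (fun x => (Subtype.val ⁻¹' cylinder x.1 (n x) : Set (ShiftSpace M)))
    (fun x => (isOpen_cylinder _ _ _).preimage continuous_subtype_val)
    (fun x _ => mem_iUnion.2 ⟨x, self_mem_cylinder _ _⟩)
  refine ⟨t.sup n, fun x y hxy => ?_⟩
  obtain ⟨x₀, hx₀, hxx₀⟩ := mem_iUnion₂.1 (ht (mem_univ x))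
  have hyx₀ : y.1 ∈ cylinder x₀.1 (n x₀) := fun i hi =>
    (hxy i (hi.trans_le (Finset.le_sup hx₀))).trans (hxx₀ i hi)
  exact (hn x₀ y hyx₀).trans (hn x₀ x hxx₀).symm

section EventualConjugacy

variable {a b : ℕ} {P : Matrix (Fin a) (Fin a) ℕ} {Q : Matrix (Fin b) (Fin b) ℕ}

def EventuallyIntertwines (g : ShiftSpace P → ShiftSpace Q) (l : ℕ) : Prop :=
  ∀ x, (shiftMap Q)^[l + 1] (g x) = (shiftMap Q)^[l] (g (shiftMap P x))

def HasAnticipation (g : ShiftSpace P → ShiftSpace Q) (w : ℕ) : Prop :=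
  ∀ n x y, y.1 ∈ cylinder x.1 (n + w) → (g y).1 ∈ cylinder (g x).1 n

lemma EventuallyIntertwines.coord_iterate {g : ShiftSpace P → ShiftSpace Q} {l : ℕ}
    (hg : EventuallyIntertwines g l) (n : ℕ) (x : ShiftSpace P) {j : ℕ} (hj : l ≤ j) :
    (g ((shiftMap P)^[n] x)).1 j = (g x).1 (j + n) := by
  induction n generalizing x with
  | zero => rfl
  | succ n ih =>
    have hx := congrArg (fun y : ShiftSpace Q => y.1 (j + n - l)) (hg x)
    simp only [iterate_shiftMap_coord] at hx
    rw [Function.iterate_succ_apply, ih, show j + n = l + (j + n - l) by omega, ← hx]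
    exact congrArg (g x).1 (by omega)

lemma EventuallyIntertwines.exists_hasAnticipation {g : ShiftSpace P → ShiftSpace Q} {l : ℕ}
    (hg : EventuallyIntertwines g l) (hc : Continuous g) : ∃ w, HasAnticipation g w := by
  obtain ⟨w, hw⟩ := exists_forall_mem_cylinder_eq (fun x => (g x).block l)
    (continuous_pi fun j => (continuous_coord j).comp hc)
  refine ⟨w, fun n x y hxy j hj => ?_⟩
  rcases le_or_gt j l with hjl | hjl
  · exact congrFun (hw x y (cylinder_anti _ (by omega) hxy)) ⟨j, by omega⟩
  have hshift : ((shiftMap P)^[j - l] y).1 ∈ cylinder ((shiftMap P)^[j - l] x).1 w :=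
    fun i hi => by simpa only [iterate_shiftMap_coord] using hxy _ (by omega)
  calc (g y).1 j = (g ((shiftMap P)^[j - l] y)).1 l := by
        rw [hg.coord_iterate _ _ le_rfl, Nat.add_sub_cancel' hjl.le]
    _ = (g ((shiftMap P)^[j - l] x)).1 l := congrFun (hw _ _ hshift) (Fin.last l)
    _ = (g x).1 j := by rw [hg.coord_iterate _ _ le_rfl, Nat.add_sub_cancel' hjl.le]

lemma DependsOnFirst.image {U : Set (ShiftSpace P)} (hU : DependsOnFirst n U)
    (e : ShiftSpace P ≃ₜ ShiftSpace Q) {w' : ℕ} (hw' : HasAnticipation e.symm w') :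
    DependsOnFirst (n + w') (e '' U) := by
  rw [e.image_eq_preimage_symm]
  exact fun x hx y hy => hU _ hx _ (hw' n x y hy)

lemma wordCount_image_block (e : ShiftSpace P ≃ₜ ShiftSpace Q) {l w w' T : ℕ}
    (he : EventuallyIntertwines e l) (hw : HasAnticipation e w)
    (hw' : HasAnticipation e.symm w') (hT : l + w + w' ≤ T) (c : ℕ) (x : ShiftSpace P)
    (u : Fin b) :
    wordCount (T + c + 1) (e '' {y | y.block c = x.block c}) u =
      wordCount T (e '' vertexCylinder P (x.1 c).2.1) u := by
  set C := {y : ShiftSpace P | y.block c = x.block c}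
  set θ := fun y => e ((shiftMap P)^[c + 1] (e.symm y))
  have hmem : ∀ y, y ∈ e '' C ↔ e.symm y ∈ C := fun y => by rw [e.image_eq_preimage_symm]; rfl
  have himage : θ '' (e '' C) = e '' vertexCylinder P (x.1 c).2.1 := by
    rw [image_image, ← image_iterate_shiftMap_block, image_image]
    simp only [θ, Homeomorph.symm_apply_apply]
    rfl
  rw [← himage]
  refine (wordCount_image_eq_of_injOn (l := l) (d := c + 1) (by omega)
    (((dependsOnFirst_block c _).image e hw').mono (by omega)) ?_ ?_ ?_ u).symm
  · intro y hy y' hy' hyy'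
    exact e.symm.injective (injOn_iterate_shiftMap_block c _ ((hmem y).1 hy) ((hmem y').1 hy')
      (e.injective hyy'))
  · intro y _ j hj
    simp only [θ, he.coord_iterate _ _ hj, Homeomorph.apply_symm_apply]
  · intro y _ y' _ hyy'
    refine hw l _ _ fun i hi => ?_
    simp only [iterate_shiftMap_coord]
    exact hw' (c + 1 + l + w) y y' (cylinder_anti _ (by omega) hyy') _ (by omega)

theorem wordCount_image_eq_sum (e : ShiftSpace P ≃ₜ ShiftSpace Q) {l w w' T : ℕ}
    (he : EventuallyIntertwines e l) (hw : HasAnticipation e w)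
    (hw' : HasAnticipation e.symm w') (hT : l + w + w' ≤ T) {c : ℕ} {U : Set (ShiftSpace P)}
    (hU : DependsOnFirst (c + 1) U) (u : Fin b) :
    wordCount (T + c + 1) (e '' U) u =
      ∑ v, wordCount c U v * wordCount T (e '' vertexCylinder P v) u := by
  conv_lhs => rw [hU.eq_biUnion_block, image_iUnion₂]
  rw [wordCount_biUnion]
  · refine (Finset.sum_congr rfl fun q hq => ?_).trans (sum_prefixes_lastVertex U _)
    obtain ⟨x, -, rfl⟩ := mem_prefixes.1 hq
    exact wordCount_image_block e he hw hw' hT c x u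
  · intro q _ q' _ hqq'
    refine (disjoint_image_iff e.injective).2 (disjoint_left.2 fun y hy hy' => hqq' ?_)
    exact hy.symm.trans hy'
  · exact fun q _ => ((dependsOnFirst_block c q).image e hw').mono (by omega)

end EventualConjugacy

lemma wordCount_succ {U : Set (ShiftSpace M)} (hU : DependsOnFirst (n + 1) U) (u : Fin k) :
    wordCount (n + 1) U u = ∑ v, wordCount n U v * wordCount 0 (vertexCylinder M v) u := by
  simpa using wordCount_image_eq_sum (Homeomorph.refl (ShiftSpace M)) (l := 0) (w := 0) (w' := 0)
    (fun _ => rfl) (fun _ _ _ h => h) (fun _ _ _ h => h) le_rfl hU u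

lemma wordCount_zero_vertexCylinder (hM : NoZeroRows M) (v u : Fin k) :
    wordCount 0 (vertexCylinder M v) u = M v u := by
  have hrange : (·.block 0) '' {x ∈ vertexCylinder M v | (x.1 0).2.1 = u} =
      range fun c : Fin (M v u) => fun _ : Fin 1 => (⟨v, u, c⟩ : EdgeType M) := by
    ext q
    constructor
    · rintro ⟨x, ⟨hv, hu⟩, rfl⟩
      have hedge : ∀ ε : EdgeType M, ε.1 = v → ε.2.1 = u → ∃ c, (⟨v, u, c⟩ : EdgeType M) = ε := by
        rintro ⟨v, u, c⟩ rfl rfl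
        exact ⟨c, rfl⟩
      obtain ⟨c, hc⟩ := hedge _ hv hu
      refine ⟨c, funext fun j => ?_⟩
      obtain rfl := Fin.fin_one_eq_zero j
      exact hc
    · rintro ⟨c, rfl⟩
      obtain ⟨x, hx⟩ := exists_coord_zero_eq hM ⟨v, u, c⟩
      refine ⟨x, ⟨?_, ?_⟩, funext fun j => ?_⟩
      · show (x.1 0).1 = v
        rw [hx]
      · rw [hx]
      · obtain rfl := Fin.fin_one_eq_zero j
        exact hx
  rw [wordCount_eq_ncard, hrange]
  refine (ncard_range_of_injective fun c c' hcc' => ?_).trans (Nat.card_fin _)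
  simpa using congrFun hcc' 0

lemma wordCount_vertexCylinder (hM : NoZeroRows M) (n : ℕ) (i u : Fin k) :
    wordCount n (vertexCylinder M i) u = (M ^ (n + 1)) i u := by
  induction n generalizing u with
  | zero => rw [wordCount_zero_vertexCylinder hM, pow_one]
  | succ n ih =>
    rw [wordCount_succ ((dependsOnFirst_vertexCylinder i).mono (by omega)), pow_succ, mul_apply]
    simp only [ih, wordCount_zero_vertexCylinder hM]

section CountMatrix

variable {a b : ℕ} {P : Matrix (Fin a) (Fin a) ℕ} {Q : Matrix (Fin b) (Fin b) ℕ}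

noncomputable def countMatrix (g : ShiftSpace P → ShiftSpace Q) (n : ℕ) :
    Matrix (Fin a) (Fin b) ℕ :=
  of fun i u => wordCount n (g '' vertexCylinder P i) u

variable (e : ShiftSpace P ≃ₜ ShiftSpace Q) {l w w' N : ℕ}

lemma mul_countMatrix (hP : NoZeroRows P) (hQ : NoZeroRows Q) (he : EventuallyIntertwines e l)
    (hw : HasAnticipation e w) (hw' : HasAnticipation e.symm w') (hN : l + w + w' ≤ N) :
    P * countMatrix e N = countMatrix e N * Q := by
  ext i u
  have hZ : DependsOnFirst (N + 1) (e '' vertexCylinder P i) :=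
    ((dependsOnFirst_vertexCylinder i).image e hw').mono (by omega)
  calc (P * countMatrix e N) i u
      = ∑ v, wordCount 0 (vertexCylinder P i) v * wordCount N (e '' vertexCylinder P v) u := by
        simp only [mul_apply, countMatrix, of_apply, wordCount_zero_vertexCylinder hP]
    _ = wordCount (N + 1) (e '' vertexCylinder P i) u :=
        (wordCount_image_eq_sum e he hw hw' hN (dependsOnFirst_vertexCylinder i) u).symm
    _ = (countMatrix e N * Q) i u := by
        simp only [wordCount_succ hZ, mul_apply, countMatrix, of_apply,
          wordCount_zero_vertexCylinder hQ]

lemma pow_eq_countMatrix_mul (hP : NoZeroRows P) (he' : EventuallyIntertwines e.symm l)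
    (hw : HasAnticipation e w) (hw' : HasAnticipation e.symm w') (hN : l + w + w' ≤ N) :
    P ^ (N + N + 2) = countMatrix e N * countMatrix e.symm N := by
  ext i i'
  have hZ : DependsOnFirst (N + 1) (e '' vertexCylinder P i) :=
    ((dependsOnFirst_vertexCylinder i).image e hw').mono (by omega)
  calc (P ^ (N + N + 2)) i i'
      = wordCount (N + N + 1) (e.symm '' (e '' vertexCylinder P i)) i' := by
        rw [image_image]
        simp only [Homeomorph.symm_apply_apply, image_id', wordCount_vertexCylinder hP]
    _ = (countMatrix e N * countMatrix e.symm N) i i' := by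
        rw [wordCount_image_eq_sum e.symm he' hw' hw (by omega) hZ]
        simp only [mul_apply, countMatrix, of_apply]

lemma countMatrix_transpose_mulVec_one (hQ : NoZeroRows Q) (hw' : HasAnticipation e.symm w')
    (hN : w' ≤ N) :
    (countMatrix e N)ᵀ *ᵥ (fun _ => 1) = (Qᵀ ^ (N + 1)) *ᵥ (fun _ => 1) := by
  funext u
  simp only [mulVec, dotProduct, mul_one, ← transpose_pow, transpose_apply, countMatrix, of_apply]
  rw [← wordCount_biUnion, ← image_iUnion₂, iUnion_vertexCylinder,
    image_univ_of_surjective e.surjective, ← iUnion_vertexCylinder, wordCount_biUnion]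
  · simp only [wordCount_vertexCylinder hQ]
  · exact pairwiseDisjoint_vertexCylinder _
  · exact fun v _ => (dependsOnFirst_vertexCylinder v).mono (by omega)
  · exact fun i _ j _ hij => (disjoint_image_iff e.injective).2
      (pairwiseDisjoint_vertexCylinder univ (mem_univ i) (mem_univ j) hij)
  · exact fun i _ => ((dependsOnFirst_vertexCylinder i).image e hw').mono (by omega)

end CountMatrix

end ShiftSpace

/-- If the one-sided edge shifts of `A` and `B` (no zero rows) are
Matsumoto eventually conjugate, then `A` and `B` are unitally shift equivalent. -/
theorem matsumotoEventualConjugacy_implies_unitallyShiftEquivalent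
    {n m : ℕ} (A : Matrix (Fin n) (Fin n) ℕ) (B : Matrix (Fin m) (Fin m) ℕ)
    (hA : NoZeroRows A) (hB : NoZeroRows B)
    (h : ∃ (h : ShiftSpace A ≃ₜ ShiftSpace B) (l : ℕ),
      (∀ x : ShiftSpace A,
        (shiftMap B)^[l + 1] (h x) = (shiftMap B)^[l] (h (shiftMap A x))) ∧
      (∀ y : ShiftSpace B,
        (shiftMap A)^[l + 1] (h.symm y) = (shiftMap A)^[l] (h.symm (shiftMap B y)))) :
    UnitallyShiftEquivalent A B := by
  obtain ⟨h, l, hl, hl'⟩ := h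
  obtain ⟨w, hw⟩ :=
    ShiftSpace.EventuallyIntertwines.exists_hasAnticipation hl h.continuous
  obtain ⟨w', hw'⟩ :=
    ShiftSpace.EventuallyIntertwines.exists_hasAnticipation hl' h.symm.continuous
  set N := l + w + w'
  refine ⟨N + N + 2, ShiftSpace.countMatrix h N, ShiftSpace.countMatrix h.symm N, ⟨by omega,
    ShiftSpace.pow_eq_countMatrix_mul h hA hl' hw hw' le_rfl,
    ShiftSpace.pow_eq_countMatrix_mul h.symm hB hl hw' hw (by omega),
    ShiftSpace.mul_countMatrix h hA hB hl hw hw' le_rfl,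
    ShiftSpace.mul_countMatrix h.symm hB hA hl' hw' hw (by omega)⟩, 0, N + 1, ?_⟩
  rw [pow_zero, one_mulVec, zero_add]
  exact ShiftSpace.countMatrix_transpose_mulVec_one h hB hw' (by omega)
end

section
/- Let B = [[1,1],[1,1]] and C = [[1,0,1],[1,0,1],[0,1,1]]. With R the 2×3 matrix [[1,0,1],[0,1,1]] and S the 3×2 matrix [[1,0],[1,0],[0,1]], one has B = RS and C = SR (so B and C are elementary strong shift equivalent). Nevertheless, C is not unitally shift equivalent to B, and C is not unitally shift equivalent to the 1×1 matrix (2). In particular, strong shift equivalence does not imply unital shift equivalence. -/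
open Matrix

/-!
Every row of `B` sums to `2`, so the intertwining `C R = R B` makes the row-sum vector `u = R 𝟙`
an eigenvector of `C` for the eigenvalue `2`; the equations `C u = 2 u` force `u` to be constant,
so the total of the entries of `R` is a multiple of `3`.  Taking the sum of all coordinates of the
unital condition `(Bᵀ)^p Rᵀ 𝟙 = (Bᵀ)^(p+q) 𝟙` multiplies each side by a power of `2`, giving
`2^p · 3 u₀ = 2^(p+q) · m`, which is impossible when `3 ∤ m`.
-/

namespace Matrix

variable {n m α : Type*} [Fintype n] [Fintype m] [CommSemiring α]

theorem pow_mulVec_of_mulVec_eq_smul [DecidableEq n] {A : Matrix n n α} {c : α} {v : n → α}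
    (h : A *ᵥ v = c • v) (k : ℕ) : A ^ k *ᵥ v = c ^ k • v := by
  induction k with
  | zero => simp
  | succ k ih => rw [pow_succ', ← mulVec_mulVec, ih, mulVec_smul, h, smul_smul, pow_succ]

theorem one_dotProduct_transpose_pow_mulVec [DecidableEq n] {A : Matrix n n α} {c : α}
    (h : A *ᵥ 1 = c • 1) (k : ℕ) (w : n → α) : 1 ⬝ᵥ (Aᵀ ^ k *ᵥ w) = c ^ k * (1 ⬝ᵥ w) := by
  rw [dotProduct_mulVec, ← transpose_pow, vecMul_transpose, pow_mulVec_of_mulVec_eq_smul h,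
    smul_dotProduct, smul_eq_mul]

theorem mulVec_mulVec_one_of_mul_eq_mul {A : Matrix n n α} {B : Matrix m m α} {R : Matrix n m α}
    {c : α} (hR : A * R = R * B) (hB : B *ᵥ 1 = c • 1) : A *ᵥ (R *ᵥ 1) = c • (R *ᵥ 1) := by
  rw [mulVec_mulVec, hR, ← mulVec_mulVec, hB, mulVec_smul]

end Matrix

theorem eq_const_of_mulVec_eq_two_smul {u : Fin 3 → ℕ}
    (hu : !![(1 : ℕ), 0, 1; 1, 0, 1; 0, 1, 1] *ᵥ u = 2 • u) : u = fun _ => u 0 := by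
  have h0 := congrFun hu 0
  have h1 := congrFun hu 1
  have h2 := congrFun hu 2
  simp only [mulVec, dotProduct, Fin.isValue, of_apply, cons_val', cons_val_fin_one, cons_val_zero,
    Fin.sum_univ_three, one_mul, cons_val_one, zero_mul, add_zero, cons_val, Pi.smul_apply,
    smul_eq_mul, zero_add] at h0 h1 h2
  funext i
  fin_cases i <;> dsimp <;> omega

theorem not_unitallyShiftEquivalent_of_mulVec_one_eq {m : ℕ} {B : Matrix (Fin m) (Fin m) ℕ}
    (hB : B *ᵥ 1 = 2 • 1) (hm : ¬ 3 ∣ m) :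
    ¬ UnitallyShiftEquivalent !![(1 : ℕ), 0, 1; 1, 0, 1; 0, 1, 1] B := by
  rintro ⟨l, R, S, ⟨-, -, -, hCR, -⟩, p, q, hpq⟩
  have hu := eq_const_of_mulVec_eq_two_smul (mulVec_mulVec_one_of_mul_eq_mul hCR hB)
  have hsum : 1 ⬝ᵥ (Rᵀ *ᵥ 1) = 3 * (R *ᵥ 1) 0 := by
    rw [dotProduct_mulVec, vecMul_transpose, dotProduct_one, hu, Fin.sum_const, smul_eq_mul]
  have key : 2 ^ p * (3 * (R *ᵥ 1) 0) = 2 ^ p * (2 ^ q * m) := by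
    have := congrArg (1 ⬝ᵥ ·) (show Bᵀ ^ p *ᵥ Rᵀ *ᵥ 1 = Bᵀ ^ (p + q) *ᵥ 1 from hpq)
    rwa [one_dotProduct_transpose_pow_mulVec hB, one_dotProduct_transpose_pow_mulVec hB, hsum,
      one_dotProduct_one, Fintype.card_fin, pow_add, mul_assoc] at this
  have h3 : 3 ∣ 2 ^ q * m := ⟨_, (Nat.eq_of_mul_eq_mul_left (by positivity) key).symm⟩
  exact hm (Nat.Coprime.dvd_of_dvd_mul_left (Nat.Coprime.pow_right q (by norm_num)) h3)

/-- **Statement 14.** With `B = [[1,1],[1,1]]`, `C = [[1,0,1],[1,0,1],[0,1,1]]`,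
`R = [[1,0,1],[0,1,1]]` and `S = [[1,0],[1,0],[0,1]]`, one has `B = R * S` and `C = S * R`
(so `B` and `C` are elementary strong shift equivalent), yet `C` is not unitally shift
equivalent to `B`, nor to the matrix `(2)`.  In particular, strong shift equivalence does
not imply unital shift equivalence. -/
theorem strongShiftEquivalence_not_implies_unitallyShiftEquivalent :
    (!![(1 : ℕ), 1; 1, 1] = !![(1 : ℕ), 0, 1; 0, 1, 1] * !![(1 : ℕ), 0; 1, 0; 0, 1]) ∧
    (!![(1 : ℕ), 0, 1; 1, 0, 1; 0, 1, 1] =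
      !![(1 : ℕ), 0; 1, 0; 0, 1] * !![(1 : ℕ), 0, 1; 0, 1, 1]) ∧
    ¬ UnitallyShiftEquivalent !![(1 : ℕ), 0, 1; 1, 0, 1; 0, 1, 1] !![(1 : ℕ), 1; 1, 1] ∧
    ¬ UnitallyShiftEquivalent !![(1 : ℕ), 0, 1; 1, 0, 1; 0, 1, 1] !![(2 : ℕ)] :=
  ⟨by decide, by decide, not_unitallyShiftEquivalent_of_mulVec_one_eq (by decide) (by decide),
    not_unitallyShiftEquivalent_of_mulVec_one_eq (by decide) (by decide)⟩
end

section
/- For every integer k ≥ 2, let A_k = [[1,k],[k−1,1]], B_k = [[1,(k−1)k],[1,1]], and P_k = [[k−1,k],[1,1]]. Then: (i) det P_k = −1, so P_k is invertible over ℤ; (ii) B_k P_k = P_k A_k, i.e., P_k⁻¹ B_k P_k = A_k; (iii) 𝟙ᵀ P_k⁻¹ B_k = 𝟙ᵀ; and (iv) there exists an integer j ≥ 1 such that all entries of R := P_k⁻¹ B_k^j are nonnegative and the pair (R, S) with S := B_k P_k A_k^j is a unital shift equivalence of lag 2j+1 from A_k to B_k. In particular, A_k and B_k are unitally shift equivalent.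 -/
open Matrix

/-- `(R,S)` is a shift equivalence of lag `l` from `A` to `B`, where all matrices are viewed
over `ℤ` and `R`, `S` are required to have nonnegative entries (i.e. they are ℕ-matrices). -/
def IsShiftEquivalenceZ {n m : ℕ} (A : Matrix (Fin n) (Fin n) ℤ) (B : Matrix (Fin m) (Fin m) ℤ)
    (R : Matrix (Fin n) (Fin m) ℤ) (S : Matrix (Fin m) (Fin n) ℤ) (l : ℕ) : Prop :=
  1 ≤ l ∧ (∀ i j, 0 ≤ R i j) ∧ (∀ i j, 0 ≤ S i j) ∧
    A ^ l = R * S ∧ B ^ l = S * R ∧ A * R = R * B ∧ B * S = S * A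

/-- `(R,S)` is a unital shift equivalence of lag `l` from `A` to `B`:
a shift equivalence such that `(Bᵀ)^p Rᵀ 𝟙 = (Bᵀ)^(p+q) 𝟙` for some `p q : ℕ`. -/
def IsUnitalShiftEquivalenceZ {n m : ℕ} (A : Matrix (Fin n) (Fin n) ℤ)
    (B : Matrix (Fin m) (Fin m) ℤ)
    (R : Matrix (Fin n) (Fin m) ℤ) (S : Matrix (Fin m) (Fin n) ℤ) (l : ℕ) : Prop :=
  IsShiftEquivalenceZ A B R S l ∧
    ∃ p q : ℕ, (Bᵀ ^ p) *ᵥ (Rᵀ *ᵥ fun _ => 1) = (Bᵀ ^ (p + q)) *ᵥ (fun _ => 1)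

/-- `A` and `B` are unitally shift equivalent. -/
def UnitallyShiftEquivalentZ {n m : ℕ} (A : Matrix (Fin n) (Fin n) ℤ)
    (B : Matrix (Fin m) (Fin m) ℤ) : Prop :=
  ∃ (l : ℕ) (R : Matrix (Fin n) (Fin m) ℤ) (S : Matrix (Fin m) (Fin n) ℤ),
    IsUnitalShiftEquivalenceZ A B R S l



def krwXY (k : ℤ) : ℕ → ℤ × ℤ
  | 0 => (1, 0)
  | n+1 => ((krwXY k n).1 + (k-1)*k*(krwXY k n).2, (krwXY k n).1 + (krwXY k n).2)

lemma krwXY_zero (k : ℤ) : krwXY k 0 = (1, 0) := rfl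
lemma krwXY_succ (k : ℤ) (n : ℕ) :
    krwXY k (n+1) = ((krwXY k n).1 + (k-1)*k*(krwXY k n).2, (krwXY k n).1 + (krwXY k n).2) := rfl

lemma krw_powA (k : ℤ) (n : ℕ) :
    (!![1, k; k - 1, 1] : Matrix (Fin 2) (Fin 2) ℤ) ^ n =
      !![(krwXY k n).1, k * (krwXY k n).2; (k-1) * (krwXY k n).2, (krwXY k n).1] := by
  induction n with
  | zero => simp [krwXY_zero, Matrix.one_fin_two]
  | succ n ih =>
    rw [pow_succ, ih, Matrix.mul_fin_two, krwXY_succ]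
    ext i j
    fin_cases i <;> fin_cases j <;> simp <;> ring

lemma krw_bounds (k : ℤ) (hk : 2 ≤ k) (n : ℕ) :
    1 ≤ (krwXY k n).1 ∧ 0 ≤ (krwXY k n).2 ∧ (krwXY k n).2 ≤ (krwXY k n).1 := by
  induction n with
  | zero => simp [krwXY_zero]
  | succ n ih =>
    obtain ⟨h1, h2, h3⟩ := ih
    have key : 0 ≤ ((k-1)*k - 1) * (krwXY k n).2 := by
      apply mul_nonneg _ h2; nlinarith
    refine ⟨?_, ?_, ?_⟩ <;> simp only [krwXY_succ] <;> nlinarith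

lemma krw_invariant (k : ℤ) (n : ℕ) :
    (krwXY k n).1 ^ 2 - (k-1)*k * (krwXY k n).2 ^ 2 = (1 - (k-1)*k) ^ n := by
  induction n with
  | zero => simp [krwXY_zero]
  | succ n ih =>
    rw [krwXY_succ, pow_succ (1 - (k-1)*k) n, ← ih]
    ring

lemma krw_growth (k : ℤ) (hk : 2 ≤ k) (i : ℕ) :
    2 * ((k-1)*k + 3) ^ i ≤ (krwXY k (2*(i+1))).2 := by
  induction i with
  | zero => simp [krwXY_succ, krwXY_zero]
  | succ i ih =>
    have h2i := krw_bounds k hk (2*(i+1))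
    have hstep : (krwXY k (2*(i+2))).2 =
        2 * (krwXY k (2*(i+1))).1 + ((k-1)*k + 1) * (krwXY k (2*(i+1))).2 := by
      have : 2*(i+2) = (2*(i+1)) + 1 + 1 := by ring
      rw [this, krwXY_succ, krwXY_succ]
      ring
    have hm3 : (0:ℤ) ≤ (k-1)*k + 3 := by nlinarith
    have hpow : (0:ℤ) ≤ ((k-1)*k + 3) ^ i := pow_nonneg hm3 i
    rw [hstep, pow_succ]
    nlinarith [mul_le_mul_of_nonneg_left ih hm3]


lemma krw_binom (a : ℤ) (ha : 0 ≤ a) (n : ℕ) :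
    a^(n+1) + 4*(n+1)*a^n ≤ (a+4)^(n+1) := by
  induction n with
  | zero => simp
  | succ n ih =>
    have hpow : (0:ℤ) ≤ a ^ n := pow_nonneg ha n
    have h4 : (0:ℤ) ≤ a + 4 := by linarith
    have hexp : (a+4) * (a^(n+1) + 4*((n:ℤ)+1)*a^n) =
        a^(n+2) + 4*((n:ℤ)+2)*a^(n+1) + 16*((n:ℤ)+1)*a^n := by ring
    have h16 : (0:ℤ) ≤ 16*((n:ℤ)+1)*a^n := by positivity
    calc a^(n+2) + 4*(((n:ℕ)+1:ℕ)+1:ℤ)*a^(n+1)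
        ≤ (a+4) * (a^(n+1) + 4*((n:ℤ)+1)*a^n) := by push_cast; rw [hexp]; push_cast; linarith
      _ ≤ (a+4) * (a+4)^(n+1) := mul_le_mul_of_nonneg_left ih h4
      _ = (a+4)^(n+2) := by ring

lemma krw_final (k : ℤ) (hk : 2 ≤ k) :
    ∃ J : ℕ, 1 ≤ J ∧ (k-1) * (krwXY k J).2 ≤ (krwXY k J).1 ∧
      (krwXY k J).1 ≤ k * (krwXY k J).2 := by
  set m : ℤ := (k-1)*k with hm
  have hm2 : 2 ≤ m := by nlinarith
  set c : ℕ := (m - 1).toNat with hc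
  have hcz : (c : ℤ) = m - 1 := Int.toNat_of_nonneg (by linarith)
  have hc1 : 1 ≤ c := by omega
  set n0 : ℕ := c^2 - 1 with hn0
  have hn01 : n0 + 1 = c^2 := by
    have : 1 ≤ c^2 := Nat.one_le_pow _ _ (by omega)
    omega
  set J : ℕ := 2 * (n0 + 2) with hJ
  refine ⟨J, by omega, ?_⟩
  have hgrow := krw_growth k hk (n0 + 1)
  have hbin := krw_binom (m - 1) (by linarith) n0
  have hcast : ((n0:ℤ) + 1) = (m-1)^2 := by
    have h := congrArg (fun t : ℕ => (t : ℤ)) hn01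
    push_cast at h
    rw [← hcz]; push_cast; omega
  have hpown : (0:ℤ) ≤ (m-1)^n0 := pow_nonneg (by linarith) n0
  have hpown1 : (0:ℤ) ≤ (m-1)^(n0+1) := pow_nonneg (by linarith) (n0+1)
  have hkey : 4 * (m-1)^(n0+2) ≤ (m+3) ^ (n0+1) := by
    calc 4 * (m-1)^(n0+2) = 4*((n0:ℤ)+1) * (m-1)^n0 := by rw [hcast]; ring
      _ ≤ (m-1)^(n0+1) + 4*((n0:ℤ)+1) * (m-1)^n0 := by linarith
      _ ≤ ((m-1)+4)^(n0+1) := hbin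
      _ = (m+3)^(n0+1) := by ring_nf
  have hy : 8 * (m-1)^(n0+2) ≤ (krwXY k J).2 := by
    have h2 : 2*(n0+1+1) = J := by omega
    rw [h2] at hgrow
    rw [← hm] at hgrow
    nlinarith [pow_nonneg (show (0:ℤ) ≤ m+3 by linarith) (n0+1)]
  have hinv := krw_invariant k J
  have heven : (1 - m)^J = (m-1)^J := by
    have h : (1 - m) = -(m-1) := by ring
    rw [h, Even.neg_pow ⟨n0+2, by omega⟩]
  rw [← hm, heven] at hinv
  obtain ⟨hx1, hy0, hyx⟩ := krw_bounds k hk J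
  set X : ℤ := (m-1)^(n0+2) with hX
  have hXnn : 0 ≤ X := pow_nonneg (by linarith) (n0+2)
  have hJpow : (m-1)^J = X^2 := by
    rw [hX, ← pow_mul]; congr 1; omega
  rw [hJpow] at hinv
  have hky2 : X^2 ≤ k * (krwXY k J).2^2 := by
    have h64 : (8*X)^2 ≤ (krwXY k J).2^2 := by
      apply pow_le_pow_left₀ (by positivity) hy
    nlinarith [mul_nonneg (show (0:ℤ) ≤ k - 2 by linarith) (sq_nonneg (krwXY k J).2)]
  constructor
  · apply le_of_pow_le_pow_left₀ two_ne_zero (by linarith)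
    have hexp : ((k-1) * (krwXY k J).2)^2 =
        m * (krwXY k J).2^2 - (k-1) * (krwXY k J).2^2 := by rw [hm]; ring
    have h1 := mul_nonneg (show (0:ℤ) ≤ k - 1 by linarith) (sq_nonneg (krwXY k J).2)
    have h2 := sq_nonneg X
    linarith
  · apply le_of_pow_le_pow_left₀ two_ne_zero (mul_nonneg (by linarith) hy0)
    have hexp : (k * (krwXY k J).2)^2 =
        m * (krwXY k J).2^2 + k * (krwXY k J).2^2 := by rw [hm]; ring
    linarith

section krwMat
variable (k : ℤ)

private def krwA : Matrix (Fin 2) (Fin 2) ℤ := !![1, k; k - 1, 1]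
private def krwB : Matrix (Fin 2) (Fin 2) ℤ := !![1, (k - 1) * k; 1, 1]
private def krwP : Matrix (Fin 2) (Fin 2) ℤ := !![k - 1, k; 1, 1]
private def krwQ : Matrix (Fin 2) (Fin 2) ℤ := !![-1, k; 1, 1 - k]

lemma krw_PQ : krwP k * krwQ k = 1 := by
  rw [krwP, krwQ, Matrix.mul_fin_two, Matrix.one_fin_two]
  ext i j
  fin_cases i <;> fin_cases j <;> simp <;> ring

lemma krw_QP : krwQ k * krwP k = 1 := by
  rw [krwP, krwQ, Matrix.mul_fin_two, Matrix.one_fin_two]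
  ext i j
  fin_cases i <;> fin_cases j <;> simp <;> ring

lemma krw_Pinv : (krwP k)⁻¹ = krwQ k := Matrix.inv_eq_right_inv (krw_PQ k)

lemma krw_BP_PA : krwB k * krwP k = krwP k * krwA k := by
  rw [krwA, krwB, krwP, Matrix.mul_fin_two, Matrix.mul_fin_two]
  ext i j
  fin_cases i <;> fin_cases j <;> simp <;> ring

lemma krw_QB_AQ : krwQ k * krwB k = krwA k * krwQ k := by
  rw [krwA, krwB, krwQ, Matrix.mul_fin_two, Matrix.mul_fin_two]
  ext i j
  fin_cases i <;> fin_cases j <;> simp <;> ring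

lemma krw_comm (n : ℕ) : krwQ k * krwB k ^ n = krwA k ^ n * krwQ k := by
  induction n with
  | zero => simp
  | succ n ih =>
    rw [pow_succ, pow_succ, ← mul_assoc, ih, mul_assoc, krw_QB_AQ, ← mul_assoc]

lemma krw_PpowQ (n : ℕ) : krwP k * krwA k ^ n * krwQ k = krwB k ^ n := by
  rw [mul_assoc, ← krw_comm, ← mul_assoc, krw_PQ, one_mul]
end krwMat

lemma krw_entries_nonneg_mul {a b c : ℕ} (M : Matrix (Fin a) (Fin b) ℤ)
    (N : Matrix (Fin b) (Fin c) ℤ) (hM : ∀ i j, 0 ≤ M i j) (hN : ∀ i j, 0 ≤ N i j) :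
    ∀ i j, 0 ≤ (M * N) i j := by
  intro i j
  rw [Matrix.mul_apply]
  exact Finset.sum_nonneg fun l _ => mul_nonneg (hM i l) (hN l j)

/-- **Statement 16.** For every integer `k ≥ 2`, with `A = [[1,k],[k-1,1]]`,
`B = [[1,(k-1)k],[1,1]]` and `P = [[k-1,k],[1,1]]`: `det P = -1`; `B P = P A` (so
`P⁻¹ B P = A`); `𝟙ᵀ P⁻¹ B = 𝟙ᵀ`; and there is `j ≥ 1` such that `R = P⁻¹ B^j` has
nonnegative entries and `(R, B P A^j)` is a unital shift equivalence of lag `2j + 1` from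
`A` to `B`.  In particular, `A` and `B` are unitally shift equivalent. -/
theorem kimRoushWilliams_matrices_unitallyShiftEquivalent (k : ℤ) (hk : 2 ≤ k) :
    Matrix.det !![k - 1, k; 1, 1] = -1 ∧
    !![1, (k - 1) * k; 1, 1] * !![k - 1, k; 1, 1] =
      !![k - 1, k; 1, 1] * !![1, k; k - 1, 1] ∧
    (!![k - 1, k; 1, 1])⁻¹ * !![1, (k - 1) * k; 1, 1] * !![k - 1, k; 1, 1] =
      !![1, k; k - 1, 1] ∧
    (fun _ => (1 : ℤ)) ᵥ* ((!![k - 1, k; 1, 1])⁻¹ * !![1, (k - 1) * k; 1, 1]) =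
      (fun _ => (1 : ℤ)) ∧
    (∃ j : ℕ, 1 ≤ j ∧
      (∀ i l, 0 ≤ ((!![k - 1, k; 1, 1])⁻¹ * !![1, (k - 1) * k; 1, 1] ^ j) i l) ∧
      IsUnitalShiftEquivalenceZ !![1, k; k - 1, 1] !![1, (k - 1) * k; 1, 1]
        ((!![k - 1, k; 1, 1])⁻¹ * !![1, (k - 1) * k; 1, 1] ^ j)
        (!![1, (k - 1) * k; 1, 1] * !![k - 1, k; 1, 1] * !![1, k; k - 1, 1] ^ j)
        (2 * j + 1)) ∧
    UnitallyShiftEquivalentZ !![1, k; k - 1, 1] !![1, (k - 1) * k; 1, 1] := by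
  have hA : krwA k = !![1, k; k - 1, 1] := rfl
  have hB : krwB k = !![1, (k - 1) * k; 1, 1] := rfl
  have hP : krwP k = !![k - 1, k; 1, 1] := rfl
  rw [← hA, ← hB, ← hP, krw_Pinv k]
  have hAn : ∀ n : ℕ, ∀ i j, 0 ≤ (krwA k ^ n) i j := by
    intro n i j
    obtain ⟨hx1, hy0, _⟩ := krw_bounds k hk n
    rw [hA, krw_powA]
    fin_cases i <;> fin_cases j <;> simp <;> nlinarith
  have hBnn : ∀ i j, 0 ≤ krwB k i j := by
    intro i j; rw [hB]; fin_cases i <;> fin_cases j <;> simp <;> nlinarith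
  have hPnn : ∀ i j, 0 ≤ krwP k i j := by
    intro i j; rw [hP]; fin_cases i <;> fin_cases j <;> simp <;> nlinarith
  have hiii : (fun _ => (1:ℤ)) ᵥ* (krwQ k * krwB k) = (fun _ => (1:ℤ)) := by
    funext i
    rw [krwQ, krwB, Matrix.mul_fin_two]
    fin_cases i <;>
      simp [Matrix.vecMul, dotProduct, Fin.sum_univ_two] <;> ring
  obtain ⟨J, hJ1, hlow, hhigh⟩ := krw_final k hk
  obtain ⟨hx1, hy0, hyx⟩ := krw_bounds k hk J
  have hRnn : ∀ i l, 0 ≤ (krwQ k * krwB k ^ J) i l := by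
    intro i l
    rw [krw_comm, hA, krw_powA, krwQ, Matrix.mul_fin_two]
    fin_cases i <;> fin_cases l <;> simp <;> nlinarith
  have hSnn : ∀ i l, 0 ≤ (krwB k * krwP k * krwA k ^ J) i l :=
    krw_entries_nonneg_mul _ _ (krw_entries_nonneg_mul _ _ hBnn hPnn) (hAn J)
  have e1 : krwA k ^ (2*J+1) = (krwQ k * krwB k ^ J) * (krwB k * krwP k * krwA k ^ J) := by
    have h1 : krwQ k * krwB k ^ J * (krwB k * krwP k * krwA k ^ J)
        = (krwQ k * krwB k ^ (J+1)) * krwP k * krwA k ^ J := by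
      rw [pow_succ]
      simp only [mul_assoc]
    rw [h1, krw_comm, mul_assoc (krwA k ^ (J+1)), krw_QP, mul_one, ← pow_add]
    congr 1
    omega
  have e2 : krwB k ^ (2*J+1) = (krwB k * krwP k * krwA k ^ J) * (krwQ k * krwB k ^ J) := by
    have h1 : krwB k * krwP k * krwA k ^ J * (krwQ k * krwB k ^ J)
        = krwB k * (krwP k * krwA k ^ J * krwQ k) * krwB k ^ J := by
      simp only [mul_assoc]
    rw [h1, krw_PpowQ, ← pow_succ', ← pow_add]
    congr 1
    omega
  have e3 : krwA k * (krwQ k * krwB k ^ J) = (krwQ k * krwB k ^ J) * krwB k := by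
    rw [← mul_assoc, ← krw_QB_AQ, mul_assoc, mul_assoc, ← pow_succ, ← pow_succ']
  have e4 : krwB k * (krwB k * krwP k * krwA k ^ J)
      = (krwB k * krwP k * krwA k ^ J) * krwA k := by
    have hBBP : krwB k * krwB k * krwP k = krwB k * krwP k * krwA k := by
      rw [mul_assoc, krw_BP_PA, ← mul_assoc, krw_BP_PA]
    calc krwB k * (krwB k * krwP k * krwA k ^ J)
        = krwB k * krwB k * krwP k * krwA k ^ J := by simp only [← mul_assoc]
      _ = krwB k * krwP k * krwA k * krwA k ^ J := by rw [hBBP]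
      _ = krwB k * krwP k * (krwA k * krwA k ^ J) := by
          rw [mul_assoc (krwB k * krwP k)]
      _ = krwB k * krwP k * (krwA k ^ J * krwA k) := by rw [← pow_succ', ← pow_succ]
      _ = krwB k * krwP k * krwA k ^ J * krwA k := by rw [← mul_assoc]
  have hUnit : ((krwB k)ᵀ ^ 0) *ᵥ ((krwQ k * krwB k ^ J)ᵀ *ᵥ fun _ => (1:ℤ))
      = ((krwB k)ᵀ ^ (0 + (J-1))) *ᵥ (fun _ => (1:ℤ)) := by
    have hJsplit : krwB k ^ J = krwB k * krwB k ^ (J-1) := by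
      rw [← pow_succ']
      congr 1
      omega
    rw [pow_zero, Matrix.one_mulVec, zero_add, ← Matrix.transpose_pow,
      Matrix.mulVec_transpose, Matrix.mulVec_transpose, hJsplit, ← mul_assoc,
      ← Matrix.vecMul_vecMul, hiii]
  refine ⟨?_, krw_BP_PA k, ?_, ?_, ⟨J, hJ1, hRnn,
      ⟨⟨by omega, hRnn, hSnn, e1, e2, e3, e4⟩, 0, J-1, hUnit⟩⟩,
      2*J+1, krwQ k * krwB k ^ J, krwB k * krwP k * krwA k ^ J,
      ⟨by omega, hRnn, hSnn, e1, e2, e3, e4⟩, 0, J-1, hUnit⟩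
  · rw [hP]
    simp [Matrix.det_fin_two_of]
  · rw [krw_QB_AQ, mul_assoc, krw_QP, mul_one]
  · rw [hiii]
end

section
/- Let A be an 8×8 ℕ-matrix such that A·𝟙 = 2·𝟙 and 𝟙ᵀ·A = 2·𝟙ᵀ (the all-ones vector is a right and a left eigenvector for eigenvalue 2) and whose characteristic polynomial is x⁷(x − 2). Then A⁷ = 16·J, where J is the 8×8 all-ones matrix, i.e., A⁷ = (2⁴·𝟙)(𝟙ᵀ), and the pair (2⁴·𝟙, 𝟙ᵀ) is a unital shift equivalence of lag 7 from A to the 1×1 matrix (2). In particular, A (for example the adjacency matrix of Ashley's graph) is unitally shift equivalent to (2). -/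
open Matrix

/-!
The all-ones vector `𝟙` is an eigenvector of `A` for `2`, which is a simple root of the
characteristic polynomial `x⁷ (x - 2)`; hence over `ℚ` the `2`-eigenspace is the line `ℚ 𝟙`.
By Cayley–Hamilton `A⁸ = 2 A⁷`, and `𝟙ᵀ A = 2 𝟙ᵀ`, so `N = 8 A⁷ - 2⁷ J` satisfies `A N = 2 N`
and `𝟙ᵀ N = 0`: every column of `N` is a multiple of `𝟙` with coordinate sum zero, so `N = 0`
and `A⁷ = 16 J`. The shift-equivalence identities with `(2)` then reduce to the row and column
sums of `A`.
-/

open Polynomial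

namespace Matrix

section Field

variable {K ι : Type*} [Field K] [Fintype ι] [DecidableEq ι]

theorem exists_smul_eq_of_rootMultiplicity_le_one {B : Matrix ι ι K} {μ : K}
    (hμ : B.charpoly.rootMultiplicity μ ≤ 1) {u v : ι → K} (hu : u ≠ 0)
    (hBu : B *ᵥ u = μ • u) (hBv : B *ᵥ v = μ • v) : ∃ a : K, a • u = v := by
  set E := Module.End.eigenspace (toLin' B) μ
  have hE : Module.finrank K E = 1 := by
    refine le_antisymm ?_ (Submodule.one_le_finrank_iff.mpr ?_)
    · rw [← Matrix.charpoly_toLin'] at hμ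
      exact (LinearMap.finrank_eigenspace_le _ μ).trans hμ
    · exact (Submodule.ne_bot_iff E).mpr ⟨u, Module.End.mem_eigenspace_iff.mpr hBu, hu⟩
  obtain ⟨a, ha⟩ := exists_smul_eq_of_finrank_eq_one hE
    (x := ⟨u, Module.End.mem_eigenspace_iff.mpr hBu⟩) (by simpa using hu)
    ⟨v, Module.End.mem_eigenspace_iff.mpr hBv⟩
  exact ⟨a, congrArg Subtype.val ha⟩

theorem eq_zero_of_mul_eq_smul_of_one_vecMul_eq_zero {B N : Matrix ι ι K} {μ : K}
    (hμ : B.charpoly.rootMultiplicity μ ≤ 1) (hn : (Fintype.card ι : K) ≠ 0)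
    (hB : B *ᵥ 1 = μ • 1) (hBN : B * N = μ • N) (hN : 1 ᵥ* N = 0) : N = 0 := by
  have : Nonempty ι := Fintype.card_pos_iff.mp <| Nat.pos_of_ne_zero fun h => hn (by simp [h])
  ext i j
  obtain ⟨a, ha⟩ := exists_smul_eq_of_rootMultiplicity_le_one hμ one_ne_zero hB
    (v := N *ᵥ Pi.single j 1) (by rw [mulVec_mulVec, hBN, smul_mulVec])
  have hsum : 1 ⬝ᵥ N *ᵥ Pi.single j 1 = 0 := by rw [dotProduct_mulVec, hN, zero_dotProduct]
  rw [← ha, dotProduct_smul, dotProduct_one, smul_eq_mul] at hsum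
  have ha0 : a = 0 := by simpa [hn] using hsum
  simpa [ha0] using (congrFun ha i).symm

theorem rootMultiplicity_X_pow_mul_X_sub_C {μ : K} (hμ : μ ≠ 0) (k : ℕ) :
    (X ^ k * (X - C μ)).rootMultiplicity μ = 1 := by
  rw [rootMultiplicity_mul (mul_ne_zero (pow_ne_zero _ X_ne_zero) (X_sub_C_ne_zero μ)),
    rootMultiplicity_X_sub_C_self, rootMultiplicity_eq_zero (by simp [hμ])]

theorem pow_succ_eq_smul_pow_of_charpoly_eq {B : Matrix ι ι K} {μ : K} {k : ℕ}
    (hchar : B.charpoly = X ^ k * (X - C μ)) : B ^ (k + 1) = μ • B ^ k := by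
  have h := aeval_self_charpoly B
  rw [hchar, map_mul, map_pow, map_sub, aeval_X, aeval_C, Algebra.algebraMap_eq_smul_one,
    Matrix.mul_sub, Matrix.mul_smul, Matrix.mul_one, sub_eq_zero, ← pow_succ] at h
  exact h

theorem one_vecMul_pow {B : Matrix ι ι K} {μ : K} (hl : 1 ᵥ* B = μ • 1) (k : ℕ) :
    1 ᵥ* B ^ k = μ ^ k • 1 := by
  induction k with
  | zero => simp
  | succ k ih => rw [pow_succ, ← vecMul_vecMul, ih, smul_vecMul, hl, smul_smul, pow_succ]

theorem card_smul_pow_eq_of_charpoly_eq [CharZero K] {B : Matrix ι ι K} {μ : K} {k : ℕ}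
    (hμ : μ ≠ 0) (hchar : B.charpoly = X ^ k * (X - C μ))
    (hr : B *ᵥ 1 = μ • 1) (hl : 1 ᵥ* B = μ • 1) :
    (Fintype.card ι : K) • B ^ k = of fun _ _ => μ ^ k := by
  have hcard : Fintype.card ι = k + 1 := by
    rw [← B.charpoly_natDegree_eq_dim, hchar]
    simp [natDegree_mul, X_sub_C_ne_zero]
  have hJ : (of fun _ _ => μ ^ k : Matrix ι ι K) = μ ^ k • vecMulVec 1 1 := by
    ext; simp
  rw [hJ, ← sub_eq_zero]
  refine eq_zero_of_mul_eq_smul_of_one_vecMul_eq_zero (μ := μ) (B := B) ?_ ?_ hr ?_ ?_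
  · rw [hchar, rootMultiplicity_X_pow_mul_X_sub_C hμ]
  · rw [hcard]; exact_mod_cast Nat.succ_ne_zero k
  · rw [Matrix.mul_sub, Matrix.mul_smul, Matrix.mul_smul, ← pow_succ',
      pow_succ_eq_smul_pow_of_charpoly_eq hchar, mul_vecMulVec, hr, smul_sub, smul_comm μ,
      smul_vecMulVec, smul_comm μ]
  · rw [vecMul_sub, vecMul_smul, vecMul_smul, one_vecMul_pow hl, vecMul_vecMulVec, dotProduct_one]
    simp [smul_smul, mul_comm]

end Field

theorem card_smul_pow_eq_of_charpoly_map_eq {ι : Type*} [Fintype ι] [DecidableEq ι]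
    {A : Matrix ι ι ℕ} {μ k : ℕ} (hμ : μ ≠ 0)
    (hchar : (A.map (Nat.cast : ℕ → ℤ)).charpoly = X ^ k * (X - C (μ : ℤ)))
    (hr : A *ᵥ (fun _ => 1) = fun _ => μ) (hl : (fun _ => 1) ᵥ* A = fun _ => μ) :
    Fintype.card ι • A ^ k = of fun _ _ => μ ^ k := by
  set B := (Nat.castRingHom ℚ).mapMatrix A
  have hB : B = (Int.castRingHom ℚ).mapMatrix (A.map (Nat.cast : ℕ → ℤ)) := by ext; simp [B]
  have hchar' : B.charpoly = X ^ k * (X - C (μ : ℚ)) := by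
    rw [hB, RingHom.mapMatrix_apply, charpoly_map, hchar]; simp
  have hr' : B *ᵥ 1 = (μ : ℚ) • 1 := by
    ext i
    have := RingHom.map_mulVec (Nat.castRingHom ℚ) A (fun _ => 1) i
    rw [hr] at this
    simpa [B, Function.comp_def, ← Pi.one_def] using this.symm
  have hl' : 1 ᵥ* B = (μ : ℚ) • 1 := by
    ext j
    have := RingHom.map_vecMul (Nat.castRingHom ℚ) A (fun _ => 1) j
    rw [hl] at this
    simpa [B, Function.comp_def, ← Pi.one_def] using this.symm
  have h := card_smul_pow_eq_of_charpoly_eq (Nat.cast_ne_zero.mpr hμ) hchar' hr' hl'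
  rw [← map_pow] at h
  ext i j
  have := congrFun₂ h i j
  simp only [RingHom.mapMatrix_apply, Nat.coe_castRingHom, Matrix.smul_apply, map_apply,
    smul_eq_mul, of_apply] at this
  exact_mod_cast this

theorem one_by_one_pow {R : Type*} [Semiring R] (a : R) (k : ℕ) : !![a] ^ k = !![a ^ k] := by
  have h : !![a] = diagonal fun _ : Fin 1 => a := by ext i j; fin_cases i; fin_cases j; rfl
  rw [h, diagonal_pow]; ext i j; fin_cases i; fin_cases j; rfl

theorem of_const_mul_of_const {R l m n : Type*} [Semiring R] [Fintype m] (a b : R) :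
    (of fun (_ : l) (_ : m) => a) * (of fun (_ : m) (_ : n) => b) =
      of fun _ _ => Fintype.card m • (a * b) := by
  ext; simp [mul_apply]

end Matrix

theorem isUnitalShiftEquivalence_of_pow_eq {n l μ c : ℕ} {A : Matrix (Fin n) (Fin n) ℕ}
    (hl : 1 ≤ l) (hr : A *ᵥ (fun _ => 1) = fun _ => μ) (hlft : (fun _ => 1) ᵥ* A = fun _ => μ)
    (hpow : A ^ l = of fun _ _ => c) (hc : n * c = μ ^ l) :
    IsUnitalShiftEquivalence A !![μ] (of fun (_ : Fin n) (_ : Fin 1) => c)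
      (of fun (_ : Fin 1) (_ : Fin n) => 1) l := by
  refine ⟨⟨hl, ?_, ?_, ?_, ?_⟩, 0, l, ?_⟩
  · rw [hpow, of_const_mul_of_const]; simp
  · rw [one_by_one_pow, of_const_mul_of_const, ← hc]; ext i j; fin_cases i; fin_cases j; simp
  · ext i j
    have := congrFun hr i
    simp only [mulVec, dotProduct, mul_one] at this
    fin_cases j; simp [mul_apply, ← Finset.mul_sum, this, mul_comm]
  · ext i j
    have := congrFun hlft j
    simp only [vecMul, dotProduct, one_mul] at this
    fin_cases i; simp [mul_apply, this]
  · rw [pow_zero, one_mulVec, zero_add, ← transpose_pow, one_by_one_pow]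
    ext i; fin_cases i
    simp [mulVec, dotProduct, hc]

/-- **Statement 18.** If `A` is an `8 × 8` ℕ-matrix whose all-ones vector is a right and a
left eigenvector for the eigenvalue `2` and whose characteristic polynomial (over `ℤ`) is
`x⁷ (x - 2)`, then `A⁷ = 16 J = (2⁴ 𝟙)(𝟙ᵀ)` (where `J` is the all-ones matrix) and the pair
`(2⁴ 𝟙, 𝟙ᵀ)` is a unital shift equivalence of lag `7` from `A` to `(2)`; in particular `A`
is unitally shift equivalent to `(2)`. -/
theorem ashley_unitallyShiftEquivalent_two (A : Matrix (Fin 8) (Fin 8) ℕ)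
    (hRight : A *ᵥ (fun _ => 1) = fun _ => 2)
    (hLeft : (fun _ => 1) ᵥ* A = fun _ => 2)
    (hChar : (A.map (Nat.cast : ℕ → ℤ)).charpoly =
      Polynomial.X ^ 7 * (Polynomial.X - Polynomial.C 2)) :
    A ^ 7 = Matrix.of (fun _ _ => 2 ^ 4) ∧
    A ^ 7 = Matrix.of (fun (_ : Fin 8) (_ : Fin 1) => 2 ^ 4) *
      Matrix.of (fun (_ : Fin 1) (_ : Fin 8) => 1) ∧
    IsUnitalShiftEquivalence A !![2]
      (Matrix.of (fun (_ : Fin 8) (_ : Fin 1) => 2 ^ 4))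
      (Matrix.of (fun (_ : Fin 1) (_ : Fin 8) => 1)) 7 ∧
    UnitallyShiftEquivalent A !![2] := by
  have h8 := card_smul_pow_eq_of_charpoly_map_eq (by norm_num) (by exact_mod_cast hChar)
    hRight hLeft
  have hA7 : A ^ 7 = of fun _ _ => 2 ^ 4 := by
    ext i j
    have := congrFun₂ h8 i j
    simp only [Fintype.card_fin, Matrix.smul_apply, smul_eq_mul, of_apply] at this
    simp only [of_apply]
    omega
  have hRS : A ^ 7 = (of fun (_ : Fin 8) (_ : Fin 1) => 2 ^ 4) *
      of fun (_ : Fin 1) (_ : Fin 8) => 1 := by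
    rw [hA7, of_const_mul_of_const]; simp
  have hU := isUnitalShiftEquivalence_of_pow_eq (by norm_num) hRight hLeft hA7 (by norm_num)
  exact ⟨hA7, hRS, hU, 7, _, _, hU⟩
end
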